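/- arXiv:0911.3769 — 4 statements merged into one kernel-verified Lean document; each statement's English description precedes it below -/
import Mathlib

section
/- Let n ≥ 1 and for each c > 0 let S_{1c},…,S_{nc} be real random variables. Assume there exist a constant K > 0 and random variables Y_{kj} (1 ≤ k, j ≤ n) with Y_{kk} = 0 almost surely and P{Y_{kj} = 0} = 0 for all k ≠ j, such that: (A.1) for every k and every y ∈ ℝ, P{S_{kc} ≥ c + y} ∼ K c^{-1/2} e^{-c-y} as c → ∞; and (A.2) for every k and every y ∈ ℝ, the conditional law of (S_{kc} − S_{1c}, …, S_{kc} − S_{nc}) given {S_{kc} ≥ c + y} converges weakly to the law of (Y_{k1}, …, Y_{kn}). Then n^{-1} Σ_{k=1}^n E[(Σ_{j=1}^n e^{-Y_{kj}}) · 1{Y_{kj} ≥ 0 for all j}] = 1. -/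
/-!
Fix `j` and split the event `{S_j ≥ c}` according to the index `k` at which the vector `S` is
maximal (ties broken towards the largest index). On the `k`-th piece, `S_j ≥ c` says that the
overshoot `S_k - c` is at least the spread `S_k - S_j`. Together, (A.1) and (A.2) say that given
`S_k ≥ c`, the pair (overshoot, spread vector) converges on rectangles `[y, ∞) × B` to
`Exp(1) ⊗ law(Y_k)`. A Riemann-sum squeeze, over grids that avoid the atoms of the limit law,
therefore gives `P(piece) ∼ P{S_k ≥ c} · E[e^{-Y_kj}; Y_k ≥ 0]`. Dividing by
`K c^{-1/2} e^{-c}` and letting `c → ∞` yields `∑_k E[e^{-Y_kj}; Y_k ≥ 0] = 1` for every `j`;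
averaging over `j` gives the identity.
-/

open MeasureTheory ProbabilityTheory Filter Real Set
open scoped ENNReal Topology

namespace LikelihoodLocalization

theorem tendsto_of_forall_squeeze {α ι κ : Type*} [TopologicalSpace α]
    [LinearOrder α] [OrderTopology α] {l : Filter ι} {p : Filter κ} [p.NeBot] {f : ι → α}
    {lo hi : κ → ι → α} {a b : κ → α} {x : α}
    (hlo : ∀ N, Tendsto (lo N) l (𝓝 (a N))) (hhi : ∀ N, Tendsto (hi N) l (𝓝 (b N)))
    (ha : Tendsto a p (𝓝 x)) (hb : Tendsto b p (𝓝 x))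
    (hlof : ∀ N i, lo N i ≤ f i) (hfhi : ∀ N i, f i ≤ hi N i) : Tendsto f l (𝓝 x) := by
  rw [tendsto_order]
  refine ⟨fun y hy => ?_, fun y hy => ?_⟩
  · obtain ⟨N, hN⟩ := (ha.eventually (lt_mem_nhds hy)).exists
    exact ((hlo N).eventually (lt_mem_nhds hN)).mono fun i hi => hi.trans_le (hlof N i)
  · obtain ⟨N, hN⟩ := (hb.eventually (gt_mem_nhds hy)).exists
    exact ((hhi N).eventually (gt_mem_nhds hN)).mono fun i hi => (hfhi N i).trans_lt hi

section ExponentialTail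

variable {X : Type*} {g : X → ℝ} {C : Set X} {t : ℕ → ℝ} {h : ℝ}

def slab (C : Set X) (g : X → ℝ) (t : ℕ → ℝ) (m : ℕ) : Set X :=
  C ∩ g ⁻¹' Ico (t m) (t (m + 1))

/-- With `F y B = μ.real (Ici y ×ˢ B)` the two sums bound the `μ`-mass of the epigraph
`{(r, x) | x ∈ C, g x ≤ r}` from above and below; with `F y B = exp (-y) * ν.real B` they are
Riemann sums for `∫ x in C, exp (-g x) ∂ν`. -/
def upperSum (F : ℝ → Set X → ℝ) (C : Set X) (g : X → ℝ) (t : ℕ → ℝ) (M : ℕ) : ℝ :=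
  ∑ m ∈ Finset.range M, F (t m) (slab C g t m) + F (t M) univ

def lowerSum (F : ℝ → Set X → ℝ) (C : Set X) (g : X → ℝ) (t : ℕ → ℝ) (M : ℕ) : ℝ :=
  ∑ m ∈ Finset.range M, F (t (m + 1)) (slab C g t m)

lemma measurableSet_slab [MeasurableSpace X] (hg : Measurable g) (hC : MeasurableSet C) (m : ℕ) :
    MeasurableSet (slab C g t m) :=
  hC.inter (hg measurableSet_Ico)

lemma pairwise_disjoint_slab (ht : Monotone t) :
    Pairwise (Function.onFun Disjoint (slab C g t)) := fun _ _ hmm' =>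
  ((ht.pairwise_disjoint_on_Ico_succ hmm').preimage g).mono inter_subset_right inter_subset_right

lemma frontier_slab_subset [TopologicalSpace X] (hg : Continuous g) (m : ℕ)
    (ht : t m < t (m + 1)) :
    frontier (slab C g t m) ⊆ frontier C ∪ g ⁻¹' {t m, t (m + 1)} := by
  refine (frontier_inter_subset _ _).trans (union_subset_union inter_subset_left ?_)
  refine inter_subset_right.trans ((hg.frontier_preimage_subset _).trans ?_)
  rw [frontier_Ico ht]

variable [MeasurableSpace X] (μ : Measure (ℝ × X)) [IsFiniteMeasure μ]

lemma measureReal_le_upperSum (hg0 : ∀ x, 0 ≤ g x) (ht0 : t 0 ≤ 0) (M : ℕ) :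
    μ.real {p | p.2 ∈ C ∧ g p.2 ≤ p.1} ≤
      upperSum (fun y B => μ.real (Ici y ×ˢ B)) C g t M := by
  refine (measureReal_mono ?_).trans ((measureReal_union_le _ _).trans
    (add_le_add_left (measureReal_biUnion_finset_le _ _) _))
  rintro ⟨r, x⟩ ⟨hxC, hxr⟩
  by_cases hxM : g x < t M
  · obtain ⟨m, hm, hxm⟩ := mem_iUnion₂.1
      (Ico_subset_biUnion_Ico M t ⟨ht0.trans (hg0 x), hxM⟩)
    exact Or.inl (mem_iUnion₂.2 ⟨m, hm, hxm.1.trans hxr, hxC, hxm⟩)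
  · exact Or.inr ⟨(not_lt.1 hxM).trans hxr, mem_univ x⟩

lemma lowerSum_le_measureReal (hg : Measurable g) (hC : MeasurableSet C) (ht : Monotone t)
    (M : ℕ) :
    lowerSum (fun y B => μ.real (Ici y ×ˢ B)) C g t M ≤
      μ.real {p | p.2 ∈ C ∧ g p.2 ≤ p.1} := by
  rw [lowerSum, ← measureReal_biUnion_finset]
  · refine measureReal_mono ?_
    rintro ⟨r, x⟩ hp
    obtain ⟨m, -, hr, hxC, hxm⟩ := mem_iUnion₂.1 hp
    exact ⟨hxC, hxm.2.le.trans hr⟩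
  · exact fun m _ m' _ hmm' => ((pairwise_disjoint_slab ht hmm').set_prod_right _ _)
  · exact fun m _ => measurableSet_Ici.prod (measurableSet_slab hg hC m)

variable (ν : Measure X) [IsFiniteMeasure ν]

lemma integrable_exp_neg (hg : Measurable g) (hg0 : ∀ x, 0 ≤ g x) :
    Integrable (fun x => exp (-g x)) ν :=
  Integrable.of_bound hg.neg.exp.aestronglyMeasurable 1 (Eventually.of_forall fun x => by
    rw [norm_of_nonneg (exp_pos _).le]
    exact exp_le_one_iff.2 (neg_nonpos.2 (hg0 x)))

lemma setIntegral_exp_neg_eq_sum_slab_add (hg : Measurable g) (hg0 : ∀ x, 0 ≤ g x)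
    (hC : MeasurableSet C) (ht : Monotone t) (ht0 : t 0 ≤ 0) (M : ℕ) :
    ∫ x in C, exp (-g x) ∂ν = ∑ m ∈ Finset.range M, ∫ x in slab C g t m, exp (-g x) ∂ν +
      ∫ x in C ∩ g ⁻¹' Ici (t M), exp (-g x) ∂ν := by
  have hcover : C = (⋃ m ∈ Finset.range M, slab C g t m) ∪ (C ∩ g ⁻¹' Ici (t M)) := by
    ext x
    refine ⟨fun hx => ?_, ?_⟩
    · by_cases hxM : g x < t M
      · obtain ⟨m, hm, hxm⟩ := mem_iUnion₂.1
          (Ico_subset_biUnion_Ico M t ⟨ht0.trans (hg0 x), hxM⟩)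
        exact Or.inl (mem_iUnion₂.2 ⟨m, hm, hx, hxm⟩)
      · exact Or.inr ⟨hx, not_lt.1 hxM⟩
    · rintro (hx | hx)
      · obtain ⟨m, -, hxm⟩ := mem_iUnion₂.1 hx
        exact hxm.1
      · exact hx.1
  have hdisj : Disjoint (⋃ m ∈ Finset.range M, slab C g t m) (C ∩ g ⁻¹' Ici (t M)) := by
    refine disjoint_iUnion₂_left.2 fun m hm => disjoint_left.2 ?_
    rintro x ⟨-, -, hxm⟩ ⟨-, hxM⟩
    exact (hxm.trans_le (ht (Finset.mem_range.1 hm))).not_ge hxM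
  have hint := integrable_exp_neg ν hg hg0
  conv_lhs => rw [hcover]
  rw [setIntegral_union hdisj (hC.inter (hg measurableSet_Ici)) hint.integrableOn hint.integrableOn,
    integral_biUnion_finset _ (fun m _ => measurableSet_slab hg hC m)
      (fun m _ m' _ hmm' => pairwise_disjoint_slab ht hmm') fun m _ => hint.integrableOn]

lemma exp_neg_mul_le_setIntegral_slab (hg : Measurable g) (hg0 : ∀ x, 0 ≤ g x)
    (hC : MeasurableSet C) (m : ℕ) :
    exp (-t (m + 1)) * ν.real (slab C g t m) ≤ ∫ x in slab C g t m, exp (-g x) ∂ν :=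
  setIntegral_ge_of_const_le_real (measurableSet_slab hg hC m) (measure_ne_top _ _)
    (fun _ hx => exp_le_exp.2 (neg_le_neg hx.2.2.le)) (integrable_exp_neg ν hg hg0).integrableOn

lemma setIntegral_exp_neg_le {s : Set X} {a : ℝ} (hs : ∀ x ∈ s, a ≤ g x) :
    ∫ x in s, exp (-g x) ∂ν ≤ exp (-a) * ν.real s :=
  (le_norm_self _).trans (norm_setIntegral_le_of_norm_le_const (measure_lt_top _ _)
    fun x hx => by
      rw [norm_of_nonneg (exp_pos _).le]
      exact exp_le_exp.2 (neg_le_neg (hs x hx)))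

lemma monotone_of_succ_eq_add (ht : ∀ m, t (m + 1) = t m + h) (hh : 0 ≤ h) : Monotone t :=
  monotone_nat_of_le_succ fun m => by rw [ht]; linarith

lemma setIntegral_le_upperSum (hg : Measurable g) (hg0 : ∀ x, 0 ≤ g x) (hC : MeasurableSet C)
    (ht : Monotone t) (ht0 : t 0 ≤ 0) (M : ℕ) :
    ∫ x in C, exp (-g x) ∂ν ≤ upperSum (fun y B => exp (-y) * ν.real B) C g t M := by
  rw [setIntegral_exp_neg_eq_sum_slab_add ν hg hg0 hC ht ht0 M, upperSum]
  gcongr with m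
  · exact setIntegral_exp_neg_le ν fun x hx => hx.2.1
  · exact (setIntegral_exp_neg_le ν fun x hx => hx.2).trans
      (mul_le_mul_of_nonneg_left (measureReal_mono (subset_univ _)) (exp_pos _).le)

lemma lowerSum_le_setIntegral (hg : Measurable g) (hg0 : ∀ x, 0 ≤ g x) (hC : MeasurableSet C)
    (ht : Monotone t) (ht0 : t 0 ≤ 0) (M : ℕ) :
    lowerSum (fun y B => exp (-y) * ν.real B) C g t M ≤ ∫ x in C, exp (-g x) ∂ν := by
  rw [setIntegral_exp_neg_eq_sum_slab_add ν hg hg0 hC ht ht0 M, lowerSum]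
  have htail : 0 ≤ ∫ x in C ∩ g ⁻¹' Ici (t M), exp (-g x) ∂ν :=
    setIntegral_nonneg (hC.inter (hg measurableSet_Ici)) fun _ _ => (exp_pos _).le
  have hsum := Finset.sum_le_sum fun m (_ : m ∈ Finset.range M) =>
    exp_neg_mul_le_setIntegral_slab (t := t) ν hg hg0 hC m
  linarith

lemma upperSum_le (hg : Measurable g) (hg0 : ∀ x, 0 ≤ g x) (hC : MeasurableSet C)
    (ht : ∀ m, t (m + 1) = t m + h) (hh : 0 ≤ h) (ht0 : t 0 ≤ 0) (M : ℕ) :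
    upperSum (fun y B => exp (-y) * ν.real B) C g t M ≤
      exp h * ∫ x in C, exp (-g x) ∂ν + exp (-t M) * ν.real univ := by
  have hmono := monotone_of_succ_eq_add ht hh
  have hslab : ∀ m, exp (-t m) * ν.real (slab C g t m) =
      exp h * (exp (-t (m + 1)) * ν.real (slab C g t m)) := fun m => by
    rw [← mul_assoc, ← exp_add, ht]
    ring_nf
  rw [upperSum]
  gcongr
  calc ∑ m ∈ Finset.range M, exp (-t m) * ν.real (slab C g t m)
      ≤ exp h * ∑ m ∈ Finset.range M, ∫ x in slab C g t m, exp (-g x) ∂ν := by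
        simp only [hslab, ← Finset.mul_sum]
        gcongr with m
        exact exp_neg_mul_le_setIntegral_slab ν hg hg0 hC m
    _ ≤ exp h * ∫ x in C, exp (-g x) ∂ν := by
        gcongr
        rw [setIntegral_exp_neg_eq_sum_slab_add ν hg hg0 hC hmono ht0 M, le_add_iff_nonneg_right]
        exact setIntegral_nonneg (hC.inter (hg measurableSet_Ici)) fun _ _ => (exp_pos _).le

lemma le_lowerSum (hg : Measurable g) (hg0 : ∀ x, 0 ≤ g x) (hC : MeasurableSet C)
    (ht : ∀ m, t (m + 1) = t m + h) (hh : 0 ≤ h) (ht0 : t 0 ≤ 0) (M : ℕ) :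
    exp (-h) * (∫ x in C, exp (-g x) ∂ν - exp (-t M) * ν.real univ) ≤
      lowerSum (fun y B => exp (-y) * ν.real B) C g t M := by
  have hmono := monotone_of_succ_eq_add ht hh
  have hslab : ∀ m, exp (-t (m + 1)) * ν.real (slab C g t m) =
      exp (-h) * (exp (-t m) * ν.real (slab C g t m)) := fun m => by
    rw [← mul_assoc, ← exp_add, ht]
    ring_nf
  have htail : ∫ x in C ∩ g ⁻¹' Ici (t M), exp (-g x) ∂ν ≤ exp (-t M) * ν.real univ :=
    (setIntegral_exp_neg_le ν fun x hx => hx.2).trans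
      (mul_le_mul_of_nonneg_left (measureReal_mono (subset_univ _)) (exp_pos _).le)
  rw [lowerSum, setIntegral_exp_neg_eq_sum_slab_add ν hg hg0 hC hmono ht0 M]
  simp only [hslab, ← Finset.mul_sum]
  gcongr
  calc _ ≤ ∑ m ∈ Finset.range M, ∫ x in slab C g t m, exp (-g x) ∂ν := by linarith
    _ ≤ _ := by
        gcongr with m
        exact setIntegral_exp_neg_le ν fun x hx => hx.2.1

lemma exists_shift_measure_preimage_eq_zero (hg : Measurable g) (hh : h ≠ 0) :
    ∃ θ ∈ Ioo (0 : ℝ) 1, ∀ m : ℕ, ν (g ⁻¹' {(m - θ) * h}) = 0 := by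
  have hbad : (⋃ m : ℕ, (fun θ : ℝ => (m - θ) * h) ⁻¹' {a | 0 < ν {x | g x = a}}).Countable :=
    countable_iUnion fun m => (Measure.countable_meas_level_set_pos hg).preimage
      fun θ θ' e => by
        have := mul_right_cancel₀ hh e
        linarith
  obtain ⟨θ, hθ, hθI⟩ := (hbad.dense_compl ℝ).exists_between zero_lt_one
  refine ⟨θ, hθI, fun m => ?_⟩
  by_contra hne
  exact hθ (mem_iUnion.2 ⟨m, pos_iff_ne_zero.2 hne⟩)

lemma exists_grids_measure_preimage_eq_zero (hg : Measurable g) :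
    ∃ (t : ℕ → ℕ → ℝ) (h : ℕ → ℝ) (M : ℕ → ℕ), (∀ N, 0 < h N) ∧ Tendsto h atTop (𝓝 0) ∧
      (∀ N m, t N (m + 1) = t N m + h N) ∧ (∀ N, t N 0 ≤ 0) ∧
      Tendsto (fun N => t N (M N)) atTop atTop ∧ ∀ N m, ν (g ⁻¹' {t N m}) = 0 := by
  have hh (N : ℕ) : (0 : ℝ) < 1 / (N + 1) := by positivity
  choose θ hθ hatom using fun N => exists_shift_measure_preimage_eq_zero ν hg (hh N).ne'
  refine ⟨fun N m => (m - θ N) * (1 / (N + 1)), fun N => 1 / (N + 1), fun N => (N + 1) ^ 2,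
    hh, tendsto_one_div_add_atTop_nhds_zero_nat, fun N m => by push_cast; ring,
    fun N => ?_, tendsto_atTop_mono (fun N => ?_) tendsto_natCast_atTop_atTop, hatom⟩
  · simp only [Nat.cast_zero, zero_sub, neg_mul]
    exact neg_nonpos.2 (mul_nonneg (hθ N).1.le (hh N).le)
  · dsimp only
    rw [mul_one_div, le_div_iff₀ (by positivity)]
    push_cast
    nlinarith [(hθ N).2]

theorem tendsto_measureReal_epigraph [TopologicalSpace X] [OpensMeasurableSpace X]
    {ι : Type*} {l : Filter ι} {μ : ι → Measure (ℝ × X)} [∀ i, IsFiniteMeasure (μ i)]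
    (hμ : ∀ y B, MeasurableSet B → ν (frontier B) = 0 →
      Tendsto (fun i => (μ i).real (Ici y ×ˢ B)) l (𝓝 (exp (-y) * ν.real B)))
    (hg : Continuous g) (hg0 : ∀ x, 0 ≤ g x) (hC : MeasurableSet C) (hCν : ν (frontier C) = 0) :
    Tendsto (fun i => (μ i).real {p | p.2 ∈ C ∧ g p.2 ≤ p.1}) l
      (𝓝 (∫ x in C, exp (-g x) ∂ν)) := by
  have hgm := hg.measurable
  set E := ∫ x in C, exp (-g x) ∂ν
  obtain ⟨t, h, M, hh, hh0, ht, ht0, hτ, hatom⟩ := exists_grids_measure_preimage_eq_zero ν hgm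
  have hmono N := monotone_of_succ_eq_add (ht N) (hh N).le
  have hslab N m : ν (frontier (slab C g (t N) m)) = 0 := by
    refine measure_mono_null (frontier_slab_subset hg m
      (by rw [ht N]; exact lt_add_of_pos_right _ (hh N))) ?_
    rw [insert_eq, preimage_union]
    exact measure_union_null hCν (measure_union_null (hatom N m) (hatom N (m + 1)))
  have htail : Tendsto (fun N => exp (-t N (M N)) * ν.real univ) atTop (𝓝 0) := by
    simpa using (tendsto_exp_neg_atTop_nhds_zero.comp hτ).mul_const (ν.real univ)
  have hupper : Tendsto (fun N => exp (h N) * E + exp (-t N (M N)) * ν.real univ) atTop (𝓝 E) := by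
    simpa using (((continuous_exp.tendsto 0).comp hh0).mul_const E).add htail
  have hlower : Tendsto (fun N => exp (-h N) * (E - exp (-t N (M N)) * ν.real univ)) atTop
      (𝓝 E) := by
    simpa using ((continuous_exp.tendsto _).comp hh0.neg).mul (tendsto_const_nhds.sub htail)
  refine tendsto_of_forall_squeeze (p := atTop)
    (lo := fun N i => lowerSum (fun y B => (μ i).real (Ici y ×ˢ B)) C g (t N) (M N))
    (hi := fun N i => upperSum (fun y B => (μ i).real (Ici y ×ˢ B)) C g (t N) (M N))
    (fun N => tendsto_finsetSum _ fun m _ => hμ _ _ (measurableSet_slab hgm hC m) (hslab N m))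
    (fun N => (tendsto_finsetSum _ fun m _ =>
      hμ _ _ (measurableSet_slab hgm hC m) (hslab N m)).add (hμ _ _ MeasurableSet.univ (by simp)))
    (tendsto_of_tendsto_of_tendsto_of_le_of_le hlower tendsto_const_nhds
      (fun N => le_lowerSum ν hgm hg0 hC (ht N) (hh N).le (ht0 N) (M N))
      (fun N => lowerSum_le_setIntegral ν hgm hg0 hC (hmono N) (ht0 N) (M N)))
    (tendsto_of_tendsto_of_tendsto_of_le_of_le tendsto_const_nhds hupper
      (fun N => setIntegral_le_upperSum ν hgm hg0 hC (hmono N) (ht0 N) (M N))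
      (fun N => upperSum_le ν hgm hg0 hC (ht N) (hh N).le (ht0 N) (M N)))
    (fun N i => lowerSum_le_measureReal (μ i) hgm hC (hmono N) (M N))
    (fun N i => measureReal_le_upperSum (μ i) hg0 (ht0 N) (M N))

end ExponentialTail

section Cone

variable {ι : Type*} [LinearOrder ι]

/-- `(S_k - S_i)_i ∈ cone k` iff `k` is the largest index at which `S` is maximal. -/
def cone (k : ι) : Set (ι → ℝ) := {v | ∀ i ≠ k, 0 ≤ v i ∧ (k < i → 0 < v i)}

lemma sub_mem_cone_iff (a : ι → ℝ) (k : ι) :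
    (fun i => a k - a i) ∈ cone k ↔ ∀ i ≠ k, toLex (a i, i) < toLex (a k, k) := by
  refine forall₂_congr fun i hik => ?_
  simp only [sub_nonneg, sub_pos, Prod.Lex.toLex_lt_toLex]
  rcases lt_or_gt_of_ne hik with h | h <;> grind

lemma sub_nonneg_of_sub_mem_cone {a : ι → ℝ} {k : ι} (h : (fun i => a k - a i) ∈ cone k)
    (j : ι) : 0 ≤ a k - a j := by
  rcases eq_or_ne j k with rfl | hjk
  · simp
  · exact (h j hjk).1

lemma existsUnique_sub_mem_cone [Finite ι] [Nonempty ι] (a : ι → ℝ) :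
    ∃! k, (fun i => a k - a i) ∈ cone k := by
  simp only [sub_mem_cone_iff]
  obtain ⟨k, hk⟩ := Finite.exists_max fun i => toLex (a i, i)
  have hinj : Function.Injective fun i => toLex (a i, i) := fun i j e =>
    congrArg Prod.snd (toLex.injective e)
  refine ⟨k, fun i hik => (hk i).lt_of_ne (hinj.ne hik), fun k' hk' => ?_⟩
  by_contra hne
  exact (hk' k (Ne.symm hne)).not_ge (hk k')

lemma measurableSet_cone [Countable ι] (k : ι) : MeasurableSet (cone k) := by
  simp only [cone, ofPred_forall]
  measurability

lemma frontier_cone_subset [Finite ι] (k : ι) :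
    frontier (cone k) ⊆ ⋃ i ∈ ({k}ᶜ : Set ι), {v | v i = 0} := by
  have hO : IsOpen (({k}ᶜ : Set ι).pi fun _ => Ioi (0 : ℝ)) :=
    isOpen_set_pi (toFinite _) fun _ _ => isOpen_Ioi
  have hF : IsClosed (({k}ᶜ : Set ι).pi fun _ => Ici (0 : ℝ)) :=
    isClosed_set_pi fun _ _ => isClosed_Ici
  have hOC : ({k}ᶜ : Set ι).pi (fun _ => Ioi (0 : ℝ)) ⊆ cone k :=
    fun v hv i hik => ⟨(hv i hik).le, fun _ => hv i hik⟩
  have hCF : cone k ⊆ ({k}ᶜ : Set ι).pi fun _ => Ici (0 : ℝ) := fun v hv i hik => (hv i hik).1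
  rintro v ⟨hvC, hvI⟩
  have hvF := closure_minimal hCF hF hvC
  have hvO : v ∉ ({k}ᶜ : Set ι).pi fun _ => Ioi (0 : ℝ) := fun h => hvI (interior_maximal hOC hO h)
  simp only [Set.mem_pi, mem_Ioi, not_forall] at hvO
  obtain ⟨i, hik, hvi⟩ := hvO
  exact mem_iUnion₂.2 ⟨i, hik, le_antisymm (not_lt.1 hvi) (hvF i hik)⟩

lemma sum_measureReal_inter_sub_mem_cone [Fintype ι] [Nonempty ι] {Ω : Type*}
    [MeasurableSpace Ω] (P : Measure Ω) [IsFiniteMeasure P] {a : ι → Ω → ℝ}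
    (ha : ∀ i, Measurable (a i)) {A : Set Ω} (hA : MeasurableSet A) :
    ∑ k, P.real (A ∩ {ω | (fun i => a k ω - a i ω) ∈ cone k}) = P.real A := by
  have hmeas k : MeasurableSet {ω | (fun i => a k ω - a i ω) ∈ cone k} :=
    measurable_pi_lambda _ (fun i => (ha k).sub (ha i)) (measurableSet_cone k)
  rw [← measureReal_biUnion_finset (fun k _ k' _ hkk' => ?_) fun k _ => hA.inter (hmeas k)]
  · congr 1
    ext ω
    simpa [← inter_iUnion] using fun _ => (existsUnique_sub_mem_cone fun i => a i ω).exists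
  · exact disjoint_left.2 fun ω hk hk' =>
      hkk' ((existsUnique_sub_mem_cone fun i => a i ω).unique hk.2 hk'.2)

end Cone

theorem tendsto_measureReal_of_tendsto_integral {X ι : Type*} [MeasurableSpace X]
    [TopologicalSpace X] [OpensMeasurableSpace X] [HasOuterApproxClosed X] {l : Filter ι}
    {μ : ι → Measure X} {ν : Measure X} [IsProbabilityMeasure ν]
    (hμ : ∀ᶠ i in l, IsProbabilityMeasure (μ i))
    (h : ∀ f : BoundedContinuousFunction X ℝ,
      Tendsto (fun i => ∫ x, f x ∂μ i) l (𝓝 (∫ x, f x ∂ν)))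
    {B : Set X} (hB : ν (frontier B) = 0) :
    Tendsto (fun i => (μ i).real B) l (𝓝 (ν.real B)) := by
  classical
  let ν' : ProbabilityMeasure X := ⟨ν, inferInstance⟩
  let κ : ι → ProbabilityMeasure X := fun i =>
    if hi : IsProbabilityMeasure (μ i) then ⟨μ i, hi⟩ else ν'
  have hκ : ∀ᶠ i in l, (κ i : Measure X) = μ i := hμ.mono fun i hi => by simp [κ, hi]
  have hlim : Tendsto κ l (𝓝 ν') :=
    ProbabilityMeasure.tendsto_iff_forall_integral_tendsto.2 fun f =>
      (h f).congr' (hκ.mono fun i hi => by simp only [hi])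
  exact ((ENNReal.tendsto_toReal (measure_ne_top ν B)).comp
    (ProbabilityMeasure.tendsto_measure_of_null_frontier_of_tendsto' hlim hB)).congr'
      (hκ.mono fun i hi => by simp only [Function.comp, hi, measureReal_def])

lemma tendsto_div_of_tendsto_div_mul_exp {α : Type*} {l : Filter α} {f f₀ D : α → ℝ} {y : ℝ}
    (hf : Tendsto (fun c => f c / (D c * exp (-y))) l (𝓝 1))
    (hf₀ : Tendsto (fun c => f₀ c / D c) l (𝓝 1)) :
    Tendsto (fun c => f c / f₀ c) l (𝓝 (exp (-y))) := by
  have hD : ∀ᶠ c in l, D c ≠ 0 :=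
    (hf₀.eventually_ne one_ne_zero).mono fun c hc => (div_ne_zero_iff.1 hc).2
  simpa using ((hf.div hf₀ one_ne_zero).mul_const (exp (-y))).congr' (hD.mono fun c hc => by
    rcases eq_or_ne (f₀ c) 0 with h0 | h0
    · simp [h0]
    · simp only [Pi.div_apply]
      field_simp)

section Localization

variable {Ω ι : Type*} {S : ℝ → ι → Ω → ℝ}

def spread (S : ℝ → ι → Ω → ℝ) (c : ℝ) (k : ι) (ω : Ω) : ι → ℝ := fun j => S c k ω - S c j ω

-- `max (v j) 0` rather than `v j` because `tendsto_measureReal_epigraph` needs a nonnegative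
-- function; the two agree on `cone k` (for `j = k` since the `k`-th entry of a spread is `0`)
lemma preimage_epigraph_max_eq [LinearOrder ι] (c : ℝ) (k j : ι) :
    (fun ω => (S c k ω - c, spread S c k ω)) ⁻¹'
        {p : ℝ × (ι → ℝ) | p.2 ∈ cone k ∧ max (p.2 j) 0 ≤ p.1} =
      {ω | c ≤ S c j ω} ∩ spread S c k ⁻¹' cone k := by
  ext ω
  simp only [mem_preimage, mem_ofPred_eq, mem_inter_iff, spread, max_le_iff]
  refine ⟨fun ⟨hC, hj, _⟩ => ⟨by linarith, hC⟩, fun ⟨hj, hC⟩ => ⟨hC, by linarith, ?_⟩⟩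
  linarith [sub_nonneg_of_sub_mem_cone (a := fun i => S c i ω) hC j]

variable [MeasurableSpace Ω] {P : Measure Ω} {Y : ι → ι → Ω → ℝ} {D : ℝ → ℝ}

lemma measurable_spread (hS : ∀ c k, Measurable (S c k)) (c : ℝ) (k : ι) :
    Measurable (spread S c k) :=
  measurable_pi_lambda _ fun j => (hS c k).sub (hS c j)

lemma measure_map_frontier_cone_eq_zero [Finite ι] [LinearOrder ι]
    (hY : ∀ k j, Measurable (Y k j)) (hYne : ∀ k j, k ≠ j → P {ω | Y k j ω = 0} = 0) (k : ι) :
    (P.map fun ω i => Y k i ω) (frontier (cone k)) = 0 := by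
  refine measure_mono_null (frontier_cone_subset k)
    ((measure_biUnion_null_iff (to_countable _)).2 fun i hik => ?_)
  rw [Measure.map_apply (measurable_pi_lambda _ (hY k))
    (measurableSet_eq_fun (measurable_pi_apply i) measurable_const)]
  exact hYne k i (Ne.symm hik)

lemma eventually_measure_tail_ne_zero
    (hA1 : ∀ k y, Tendsto (fun c => P.real {ω | c + y ≤ S c k ω} / (D c * exp (-y))) atTop
      (𝓝 1))
    (k : ι) (y : ℝ) :
    ∀ᶠ c in atTop, P {ω | c + y ≤ S c k ω} ≠ 0 :=
  ((hA1 k y).eventually_ne one_ne_zero).mono fun c hc h0 => by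
    simp [measureReal_def, h0] at hc

lemma tendsto_measureReal_tail_div
    (hA1 : ∀ k y, Tendsto (fun c => P.real {ω | c + y ≤ S c k ω} / (D c * exp (-y))) atTop
      (𝓝 1))
    (k : ι) (y : ℝ) :
    Tendsto (fun c => P.real {ω | c + y ≤ S c k ω} / P.real {ω | c ≤ S c k ω}) atTop
      (𝓝 (exp (-y))) :=
  tendsto_div_of_tendsto_div_mul_exp (hA1 k y) (by simpa using hA1 k 0)

lemma measureReal_inter_spread_div [IsFiniteMeasure P] (hS : ∀ c k, Measurable (S c k))
    (k : ι) (y c : ℝ) (B : Set (ι → ℝ)) :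
    P.real ({ω | c + y ≤ S c k ω} ∩ spread S c k ⁻¹' B) / P.real {ω | c ≤ S c k ω} =
      P.real {ω | c + y ≤ S c k ω} / P.real {ω | c ≤ S c k ω} *
        (P[|{ω | c + y ≤ S c k ω}]).real (spread S c k ⁻¹' B) := by
  rw [div_mul_eq_mul_div]
  congr 1
  simp only [measureReal_def]
  rw [← ENNReal.toReal_mul, mul_comm,
    cond_mul_eq_inter (measurableSet_le measurable_const (hS c k))]

lemma setIntegral_cone_eq [Countable ι] [LinearOrder ι] (hY : ∀ k j, Measurable (Y k j))
    (hYkk : ∀ k, ∀ᵐ ω ∂P, Y k k ω = 0) (hYne : ∀ k j, k ≠ j → P {ω | Y k j ω = 0} = 0)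
    (k j : ι) :
    ∫ v in cone k, exp (-max (v j) 0) ∂(P.map fun ω i => Y k i ω) =
      ∫ ω in {ω | ∀ i, 0 ≤ Y k i ω}, exp (-Y k j ω) ∂P := by
  have hYk : Measurable fun ω i => Y k i ω := measurable_pi_lambda _ (hY k)
  have hf : Continuous fun v : ι → ℝ => exp (-max (v j) 0) :=
    ((continuous_apply j).max continuous_const).neg.rexp
  rw [setIntegral_map (measurableSet_cone k) hf.aestronglyMeasurable hYk.aemeasurable]
  have hne : ∀ᵐ ω ∂P, ∀ i ≠ k, Y k i ω ≠ 0 := ae_all_iff.2 fun i => by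
    rcases eq_or_ne i k with rfl | hik
    · exact Eventually.of_forall fun _ h => absurd rfl h
    · exact (measure_eq_zero_iff_ae_notMem.1 (hYne k i hik.symm)).mono fun _ h _ => h
  have hset : (fun ω i => Y k i ω) ⁻¹' cone k =ᵐ[P] {ω | ∀ i, 0 ≤ Y k i ω} := by
    refine eventuallyEq_set.2 ?_
    filter_upwards [hYkk k, hne] with ω hkk hne
    refine ⟨fun hC i => ?_, fun h i hik => ⟨h i, fun _ => (h i).lt_of_ne (hne i hik).symm⟩⟩
    rcases eq_or_ne i k with rfl | hik
    · exact hkk.ge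
    · exact (hC i hik).1
  rw [setIntegral_congr_set hset]
  refine setIntegral_congr_fun ?_ fun ω hω => by simp [max_eq_left (hω j)]
  simp only [ofPred_forall]
  exact MeasurableSet.iInter fun i => measurableSet_le measurable_const (hY k i)

lemma integral_indicator_sum_exp_neg [IsFiniteMeasure P] [Fintype ι]
    (hY : ∀ k j, Measurable (Y k j)) (k : ι) :
    ∫ ω, {ω | ∀ j, 0 ≤ Y k j ω}.indicator (fun ω => ∑ j, exp (-Y k j ω)) ω ∂P =
      ∑ j, ∫ ω in {ω | ∀ i, 0 ≤ Y k i ω}, exp (-Y k j ω) ∂P := by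
  have hD : MeasurableSet {ω | ∀ i, 0 ≤ Y k i ω} := by
    simp only [ofPred_forall]
    exact MeasurableSet.iInter fun i => measurableSet_le measurable_const (hY k i)
  rw [integral_indicator hD, integral_finsetSum _ fun j _ => ?_]
  refine IntegrableOn.of_bound (measure_lt_top _ _) (hY k j).neg.exp.aestronglyMeasurable 1
    ((ae_restrict_mem hD).mono fun ω hω => ?_)
  rw [norm_of_nonneg (exp_pos _).le]
  exact exp_le_one_iff.2 (neg_nonpos.2 (hω j))

variable [IsProbabilityMeasure P] [Fintype ι]

lemma tendsto_cond_measureReal_spread (hS : ∀ c k, Measurable (S c k))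
    (hY : ∀ k j, Measurable (Y k j))
    (hA1 : ∀ k y, Tendsto (fun c => P.real {ω | c + y ≤ S c k ω} / (D c * exp (-y))) atTop
      (𝓝 1))
    (hA2 : ∀ k y (f : BoundedContinuousFunction (ι → ℝ) ℝ),
      Tendsto (fun c => ∫ v, f v ∂(Measure.map (spread S c k) (P[|{ω | c + y ≤ S c k ω}])))
        atTop (𝓝 (∫ ω, f (fun j => Y k j ω) ∂P)))
    (k : ι) (y : ℝ) {B : Set (ι → ℝ)} (hB : MeasurableSet B)
    (hBν : (P.map fun ω i => Y k i ω) (frontier B) = 0) :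
    Tendsto (fun c => (P[|{ω | c + y ≤ S c k ω}]).real (spread S c k ⁻¹' B)) atTop
      (𝓝 ((P.map fun ω i => Y k i ω).real B)) := by
  have hYk : Measurable fun ω i => Y k i ω := measurable_pi_lambda _ (hY k)
  have := Measure.isProbabilityMeasure_map (μ := P) hYk.aemeasurable
  refine (tendsto_measureReal_of_tendsto_integral ?_ (fun f => ?_) hBν).congr fun c =>
    map_measureReal_apply (measurable_spread hS c k) hB
  · filter_upwards [eventually_measure_tail_ne_zero hA1 k y] with c hc
    have := cond_isProbabilityMeasure hc
    exact Measure.isProbabilityMeasure_map (measurable_spread hS c k).aemeasurable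
  · rw [integral_map hYk.aemeasurable f.continuous.aestronglyMeasurable]
    exact hA2 k y f

lemma tendsto_measureReal_inter_cone [LinearOrder ι] (hS : ∀ c k, Measurable (S c k))
    (hY : ∀ k j, Measurable (Y k j)) (hYne : ∀ k j, k ≠ j → P {ω | Y k j ω = 0} = 0)
    (hA1 : ∀ k y, Tendsto (fun c => P.real {ω | c + y ≤ S c k ω} / (D c * exp (-y))) atTop
      (𝓝 1))
    (hA2 : ∀ k y (f : BoundedContinuousFunction (ι → ℝ) ℝ),
      Tendsto (fun c => ∫ v, f v ∂(Measure.map (spread S c k) (P[|{ω | c + y ≤ S c k ω}])))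
        atTop (𝓝 (∫ ω, f (fun j => Y k j ω) ∂P)))
    (k j : ι) :
    Tendsto (fun c => P.real ({ω | c ≤ S c j ω} ∩ spread S c k ⁻¹' cone k) /
        P.real {ω | c ≤ S c k ω}) atTop
      (𝓝 (∫ v in cone k, exp (-max (v j) 0) ∂(P.map fun ω i => Y k i ω))) := by
  have := Measure.isProbabilityMeasure_map (μ := P) (measurable_pi_lambda _ (hY k)).aemeasurable
  let φ : ℝ → Ω → ℝ × (ι → ℝ) := fun c ω => (S c k ω - c, spread S c k ω)
  have hφ c : Measurable (φ c) := ((hS c k).sub_const c).prodMk (measurable_spread hS c k)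
  let μ : ℝ → Measure (ℝ × (ι → ℝ)) := fun c =>
    (P.real {ω | c ≤ S c k ω})⁻¹.toNNReal • P.map (φ c)
  have hμ c {s} (hs : MeasurableSet s) :
      (μ c).real s = P.real (φ c ⁻¹' s) / P.real {ω | c ≤ S c k ω} := by
    rw [measureReal_nnreal_smul_apply, map_measureReal_apply (hφ c) hs,
      Real.coe_toNNReal _ (inv_nonneg.2 measureReal_nonneg), inv_mul_eq_div]
  have hg : Continuous fun v : ι → ℝ => max (v j) 0 := (continuous_apply j).max continuous_const
  refine (tendsto_measureReal_epigraph _ (μ := μ) (fun y B hB hBν => ?_) hg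
    (fun v => le_max_right _ _) (measurableSet_cone k)
    (measure_map_frontier_cone_eq_zero hY hYne k)).congr fun c => ?_
  · refine ((tendsto_measureReal_tail_div hA1 k y).mul
      (tendsto_cond_measureReal_spread hS hY hA1 hA2 k y hB hBν)).congr fun c => ?_
    rw [hμ c (measurableSet_Ici.prod hB), ← measureReal_inter_spread_div hS k y c B]
    congr 2
    ext ω
    simp [φ, le_sub_iff_add_le']
  · have hΓ : MeasurableSet {p : ℝ × (ι → ℝ) | p.2 ∈ cone k ∧ max (p.2 j) 0 ≤ p.1} :=
      (measurable_snd (measurableSet_cone k)).inter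
        (measurableSet_le (hg.measurable.comp measurable_snd) measurable_fst)
    rw [hμ c hΓ, preimage_epigraph_max_eq]

lemma sum_setIntegral_cone_eq_one [LinearOrder ι] [Nonempty ι] (hS : ∀ c k, Measurable (S c k))
    (hY : ∀ k j, Measurable (Y k j)) (hYne : ∀ k j, k ≠ j → P {ω | Y k j ω = 0} = 0)
    (hA1 : ∀ k y, Tendsto (fun c => P.real {ω | c + y ≤ S c k ω} / (D c * exp (-y))) atTop
      (𝓝 1))
    (hA2 : ∀ k y (f : BoundedContinuousFunction (ι → ℝ) ℝ),
      Tendsto (fun c => ∫ v, f v ∂(Measure.map (spread S c k) (P[|{ω | c + y ≤ S c k ω}])))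
        atTop (𝓝 (∫ ω, f (fun j => Y k j ω) ∂P)))
    (j : ι) :
    ∑ k, ∫ v in cone k, exp (-max (v j) 0) ∂(P.map fun ω i => Y k i ω) = 1 := by
  have hA1₀ k : Tendsto (fun c => P.real {ω | c ≤ S c k ω} / D c) atTop (𝓝 1) := by
    simpa using hA1 k 0
  have hne k : ∀ᶠ c in atTop, P.real {ω | c ≤ S c k ω} ≠ 0 :=
    ((hA1₀ k).eventually_ne one_ne_zero).mono fun c hc => (div_ne_zero_iff.1 hc).1
  have hsum := tendsto_finsetSum Finset.univ fun k _ =>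
    (tendsto_measureReal_inter_cone hS hY hYne hA1 hA2 k j).mul (hA1₀ k)
  simp only [mul_one] at hsum
  refine tendsto_nhds_unique (hsum.congr' ?_) (hA1₀ j)
  filter_upwards [eventually_all.2 hne] with c hc
  rw [← sum_measureReal_inter_sub_mem_cone P (hS c)
    (measurableSet_le measurable_const (hS c j)), Finset.sum_div]
  exact Finset.sum_congr rfl fun k _ => div_mul_div_cancel₀ (hc k)

end Localization

end LikelihoodLocalization

open LikelihoodLocalization

theorem average_likelihood_localization_identity_general
    {Ω : Type*} [MeasurableSpace Ω] (P : Measure Ω) [IsProbabilityMeasure P]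
    (n : ℕ) (hn : 1 ≤ n)
    (S : ℝ → Fin n → Ω → ℝ) (hSmeas : ∀ c k, Measurable (S c k))
    (K : ℝ)
    (Y : Fin n → Fin n → Ω → ℝ) (hYmeas : ∀ k j, Measurable (Y k j))
    (hYkk : ∀ k, ∀ᵐ ω ∂P, Y k k ω = 0)
    (hYne : ∀ k j, k ≠ j → P {ω | Y k j ω = 0} = 0)
    (hA1 : ∀ (k : Fin n) (y : ℝ),
      Tendsto (fun c : ℝ =>
          (P {ω | c + y ≤ S c k ω}).toReal / (K * c ^ (-(1 : ℝ) / 2) * Real.exp (-c - y)))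
        atTop (𝓝 1))
    (hA2 : ∀ (k : Fin n) (y : ℝ) (f : BoundedContinuousFunction (Fin n → ℝ) ℝ),
      Tendsto (fun c : ℝ =>
          ∫ v, f v ∂(Measure.map (fun ω => fun j => S c k ω - S c j ω)
            (ProbabilityTheory.cond P {ω | c + y ≤ S c k ω})))
        atTop (𝓝 (∫ ω, f (fun j => Y k j ω) ∂P))) :
    (n : ℝ)⁻¹ * ∑ k : Fin n,
        ∫ ω, Set.indicator {ω | ∀ j, 0 ≤ Y k j ω}
          (fun ω => ∑ j : Fin n, Real.exp (-(Y k j ω))) ω ∂P = 1 := by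
  have : Nonempty (Fin n) := ⟨⟨0, hn⟩⟩
  have hA1' k y : Tendsto (fun c => P.real {ω | c + y ≤ S c k ω} /
      (K * c ^ (-(1 : ℝ) / 2) * exp (-c) * exp (-y))) atTop (𝓝 1) := by
    simpa only [measureReal_def, mul_assoc, ← exp_add, ← sub_eq_add_neg] using hA1 k y
  have hcol j := sum_setIntegral_cone_eq_one hSmeas hYmeas hYne hA1' hA2 j
  simp only [integral_indicator_sum_exp_neg hYmeas, ← setIntegral_cone_eq hYmeas hYkk hYne]
  rw [Finset.sum_comm, Finset.sum_congr rfl fun j _ => hcol j, Finset.sum_const, Finset.card_univ,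
    Fintype.card_fin, nsmul_eq_mul, mul_one, inv_mul_cancel₀ (by positivity)]

/-- Conclusion (A.3) of Theorem 3: if `S_{1c},…,S_{nc}` satisfy the tail condition (A.1)
`P{S_{kc} ≥ c + y} ∼ K c^{-1/2} e^{-c-y}` and the conditional weak convergence (A.2) of
`(S_{kc} − S_{jc})_j` given `{S_{kc} ≥ c+y}` to `(Y_{kj})_j`, where `Y_{kk} = 0` a.s. and
`P{Y_{kj} = 0} = 0` for `k ≠ j`, then
`n⁻¹ ∑_k E[(∑_j e^{-Y_{kj}})·1{Y_{kj} ≥ 0 ∀j}] = 1`. -/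
theorem average_likelihood_localization_identity
    {Ω : Type*} [MeasurableSpace Ω] (P : Measure Ω) [IsProbabilityMeasure P]
    (n : ℕ) (hn : 1 ≤ n)
    (S : ℝ → Fin n → Ω → ℝ) (hSmeas : ∀ c k, Measurable (S c k))
    (K : ℝ) (hK : 0 < K)
    (Y : Fin n → Fin n → Ω → ℝ) (hYmeas : ∀ k j, Measurable (Y k j))
    (hYkk : ∀ k, ∀ᵐ ω ∂P, Y k k ω = 0)
    (hYne : ∀ k j, k ≠ j → P {ω | Y k j ω = 0} = 0)
    (hA1 : ∀ (k : Fin n) (y : ℝ),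
      Tendsto (fun c : ℝ =>
          (P {ω | c + y ≤ S c k ω}).toReal / (K * c ^ (-(1 : ℝ) / 2) * Real.exp (-c - y)))
        atTop (𝓝 1))
    (hA2 : ∀ (k : Fin n) (y : ℝ) (f : BoundedContinuousFunction (Fin n → ℝ) ℝ),
      Tendsto (fun c : ℝ =>
          ∫ v, f v ∂(Measure.map (fun ω => fun j => S c k ω - S c j ω)
            (ProbabilityTheory.cond P {ω | c + y ≤ S c k ω})))
        atTop (𝓝 (∫ ω, f (fun j => Y k j ω) ∂P))) :
    (n : ℝ)⁻¹ * ∑ k : Fin n,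
        ∫ ω, Set.indicator {ω | ∀ j, 0 ≤ Y k j ω}
          (fun ω => ∑ j : Fin n, Real.exp (-(Y k j ω))) ω ∂P = 1 :=
  average_likelihood_localization_identity_general P n hn S hSmeas K Y hYmeas hYkk hYne hA1 hA2
end

section
/- Let n ≥ 1 and for each c > 0 let S_{1c},…,S_{nc} be real random variables. Assume there exist a constant K > 0 and random variables Y_{kj} (1 ≤ k, j ≤ n) with Y_{kk} = 0 almost surely and P{Y_{kj} = 0} = 0 for all k ≠ j, such that: (A.1) for every k and every y ∈ ℝ, P{S_{kc} ≥ c + y} ∼ K c^{-1/2} e^{-c-y} as c → ∞; and (A.2) for every k and every y ∈ ℝ, the conditional law of (S_{kc} − S_{1c}, …, S_{kc} − S_{nc}) given {S_{kc} ≥ c + y} converges weakly to the law of (Y_{k1}, …, Y_{kn}). Then P{n^{-1} Σ_{j=1}^n e^{S_{jc}} ≥ e^c} ∼ K c^{-1/2} e^{-c} as c → ∞. -/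
/-!
Write `U = exp (c - S_k)` and `V = (S_k - S_j)_j`. Conditions (A.1) and (A.2) say that, scaled by
`p c = K c^(-1/2) e^(-c)`, the joint law of `(U, V)` converges to Lebesgue measure on `(0, ∞)`
times the law `ν_k` of `(Y_kj)_j`. Riemann sums over a grid that avoids the atoms of `g` under
`ν_k` then give `P{U ≤ g V, V ∈ s} / p c → ∫_s g dν_k` for continuous bounded `g ≥ 0` and
`ν_k`-continuity sets `s`.

Split `Ω` according to the first index `k` at which `j ↦ S_j` is maximal: its region has a
`ν_k`-null boundary because ties `Y_kj = 0`, `j ≠ k`, have probability zero. On that piece the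
event `e^c ≤ ∑_j w_j e^(S_j)` reads `U ≤ ∑_j w_j e^(-V_j)`, so its probability is asymptotically
`p c · ∑_j w_j β_j` with `β_j = ∑_k ∫_{region k} e^(-v_j) dν_k`. The weights `w = δ_j`, compared
with (A.1) at `y = 0`, force `β_j = 1`; the weights `w_j = 1/n` then give the theorem.
-/
open MeasureTheory ProbabilityTheory Filter Real Set
open scoped ENNReal Topology

namespace AverageLikelihoodRatio

section RiemannSum

variable {t : ℕ → ℝ} {a b δ x : ℝ}

lemma ite_le_min_sub_min (hab : a ≤ b) (hba : b ≤ a + δ) :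
    (if a ≤ x then b - a else 0) ≤ min b (x + δ) - min a (x + δ) := by
  split_ifs with h
  · rw [min_eq_left (by linarith), min_eq_left (by linarith)]
  · exact sub_nonneg.2 (min_le_min_right _ hab)

lemma min_sub_min_le_ite (hab : a ≤ b) (hba : b ≤ a + δ) :
    min b (x - δ) - min a (x - δ) ≤ if b < x then b - a else 0 := by
  split_ifs with h
  · simp only [min_def]; split_ifs <;> linarith
  · rw [min_eq_right (by linarith), min_eq_right (by linarith), sub_self]

lemma add_sum_ite_le (ht : Monotone t) (hgap : ∀ i, t (i + 1) ≤ t i + δ) (h0 : t 0 ≤ x + δ)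
    (N : ℕ) : t 0 + ∑ i ∈ Finset.range N, (if t i ≤ x then t (i + 1) - t i else 0) ≤ x + δ := by
  have hsum := Finset.sum_le_sum fun i (_ : i ∈ Finset.range N) =>
    ite_le_min_sub_min (x := x) (ht i.le_succ) (hgap i)
  rw [Finset.sum_range_sub (fun i => min (t i) (x + δ)), min_eq_left h0] at hsum
  linarith [min_le_right (t N) (x + δ)]

lemma sub_le_sum_ite (ht : Monotone t) (hgap : ∀ i, t (i + 1) ≤ t i + δ) {N : ℕ}
    (hN : x ≤ t N) (hδ : 0 ≤ δ) :
    x - δ - t 0 ≤ ∑ i ∈ Finset.range N, (if t (i + 1) < x then t (i + 1) - t i else 0) := by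
  have hsum := Finset.sum_le_sum fun i (_ : i ∈ Finset.range N) =>
    min_sub_min_le_ite (x := x) (ht i.le_succ) (hgap i)
  rw [Finset.sum_range_sub (fun i => min (t i) (x - δ)), min_eq_right (by linarith)] at hsum
  linarith [min_le_left (t 0) (x - δ)]

lemma exists_grid_avoiding {D : Set ℝ} (hD : D.Countable) (hδ : 0 < δ) :
    ∃ t : ℕ → ℝ, Monotone t ∧ 0 < t 0 ∧ t 0 ≤ δ ∧ (∀ i, t (i + 1) ≤ t i + δ) ∧
      Tendsto t atTop atTop ∧ ∀ i, t i ∉ D := by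
  have hcell (i : ℕ) : ∃ y ∈ Dᶜ, y ∈ Ioo (i * δ / 2) ((i + 1) * δ / 2) :=
    (hD.dense_compl ℝ).exists_mem_open isOpen_Ioo (nonempty_Ioo.2 (by linarith))
  choose t htD ht using hcell
  have hlo (i : ℕ) : i * δ / 2 < t i := (ht i).1
  have hhi (i : ℕ) : t i < (i + 1) * δ / 2 := (ht i).2
  refine ⟨t, monotone_nat_of_le_succ fun i => ?_, by simpa using hlo 0, by linarith [hhi 0],
    fun i => ?_, tendsto_atTop_mono (fun i => (hlo i).le) ?_, htD⟩
  · have := hlo (i + 1)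
    push_cast at this
    linarith [hhi i]
  · have := hhi (i + 1)
    push_cast at this
    linarith [hlo i]
  · exact (tendsto_natCast_atTop_atTop.atTop_mul_const hδ).atTop_div_const two_pos

end RiemannSum

section VolumeProdLimit

variable {Ω E ι : Type*} [MeasurableSpace Ω] [MeasurableSpace E] {P : Measure Ω}
  {ν : Measure E} {s : Set E} {g : E → ℝ} {t : ℕ → ℝ} {a b δ : ℝ}

lemma measureReal_Ioc_inter_preimage_eq_sub [IsFiniteMeasure P] {u : Ω → ℝ} {w : Ω → E}
    (hu : Measurable u) (hw : Measurable w) (hab : a ≤ b) {B : Set E} (hB : MeasurableSet B) :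
    P.real ({ω | u ω ∈ Ioc a b} ∩ w ⁻¹' B) =
      P.real ({ω | u ω ≤ b} ∩ w ⁻¹' B) - P.real ({ω | u ω ≤ a} ∩ w ⁻¹' B) := by
  have hsub : {ω | u ω ≤ a} ∩ w ⁻¹' B ⊆ {ω | u ω ≤ b} ∩ w ⁻¹' B :=
    inter_subset_inter_left _ fun ω (hω : u ω ≤ a) => hω.trans hab
  rw [← measureReal_sdiff hsub ((measurableSet_le hu measurable_const).inter (hw hB))]
  congr 1
  ext ω
  simp only [mem_inter_iff, mem_ofPred_eq, mem_Ioc, Set.mem_sdiff, mem_preimage, not_and]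
  exact ⟨fun ⟨⟨hau, hub⟩, hB⟩ => ⟨⟨hub, hB⟩, fun hua => absurd hua (not_le.2 hau)⟩,
    fun ⟨⟨hub, hB⟩, hnot⟩ => ⟨⟨not_le.1 fun hua => hnot hua hB, hub⟩, hB⟩⟩

lemma sum_mul_measureReal_inter_eq_setIntegral [IsFiniteMeasure ν] {A : ℕ → Set E}
    (hA : ∀ i, MeasurableSet (A i)) (w : ℕ → ℝ) (N : ℕ) :
    ∑ i ∈ Finset.range N, w i * ν.real (A i ∩ s) =
      ∫ v in s, ∑ i ∈ Finset.range N, (A i).indicator (fun _ => w i) v ∂ν := by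
  rw [integral_finsetSum _ fun i _ => (integrable_const _).indicator (hA i)]
  simp only [integral_indicator_const _ (hA _), measureReal_restrict_apply (hA _), smul_eq_mul,
    mul_comm]

lemma add_sum_mul_measureReal_le_setIntegral_add [IsFiniteMeasure ν] (ht : Monotone t)
    (hgap : ∀ i, t (i + 1) ≤ t i + δ) (ht0 : t 0 ≤ δ) (hg : Measurable g) (hg0 : ∀ v, 0 ≤ g v)
    (hint : IntegrableOn g s ν) (N : ℕ) :
    t 0 * ν.real s + ∑ i ∈ Finset.range N, (t (i + 1) - t i) * ν.real ({v | t i ≤ g v} ∩ s) ≤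
      ∫ v in s, g v ∂ν + ν.real s * δ := by
  have hA (i : ℕ) : MeasurableSet {v | t i ≤ g v} := measurableSet_le measurable_const hg
  have hsum : IntegrableOn (fun v => ∑ i ∈ Finset.range N,
      {v | t i ≤ g v}.indicator (fun _ => t (i + 1) - t i) v) s ν :=
    integrable_finsetSum _ fun i _ => (integrable_const _).indicator (hA i)
  rw [sum_mul_measureReal_inter_eq_setIntegral hA, mul_comm, ← smul_eq_mul, ← setIntegral_const,
    ← integral_add (integrable_const _) hsum, ← smul_eq_mul, ← setIntegral_const,
    ← integral_add hint (integrable_const _)]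
  refine setIntegral_mono ((integrable_const _).add hsum) (hint.add (integrable_const _))
    fun v => ?_
  simp only [indicator_apply, mem_ofPred_eq]
  exact add_sum_ite_le ht hgap (by linarith [hg0 v]) N

lemma setIntegral_sub_le_sum_mul_measureReal [IsFiniteMeasure ν] (ht : Monotone t)
    (hgap : ∀ i, t (i + 1) ≤ t i + δ) (ht0 : t 0 ≤ δ) (hδ : 0 ≤ δ) (hg : Measurable g)
    (hs : MeasurableSet s) (hint : IntegrableOn g s ν) {N : ℕ} (hN : ∀ᵐ v ∂ν, v ∈ s → g v ≤ t N) :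
    ∫ v in s, g v ∂ν - ν.real s * (2 * δ) ≤
      ∑ i ∈ Finset.range N, (t (i + 1) - t i) * ν.real ({v | t (i + 1) < g v} ∩ s) := by
  have hA (i : ℕ) : MeasurableSet {v | t (i + 1) < g v} := measurableSet_lt measurable_const hg
  rw [sum_mul_measureReal_inter_eq_setIntegral hA, ← smul_eq_mul, ← setIntegral_const,
    ← integral_sub hint (integrable_const _)]
  refine setIntegral_mono_on_ae (hint.sub (integrable_const _))
    (integrable_finsetSum _ fun i _ => (integrable_const _).indicator (hA i)) hs ?_
  filter_upwards [hN] with v hv hvs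
  simp only [indicator_apply, mem_ofPred_eq]
  linarith [sub_le_sum_ite ht hgap (hv hvs) hδ]

variable [TopologicalSpace E]

lemma measure_frontier_setOf_le_inter_null (hg : Continuous g) {t : ℝ}
    (ht : ν {v | g v = t} = 0) (hs : ν (frontier s) = 0) :
    ν (frontier ({v | t ≤ g v} ∩ s)) = 0 :=
  null_frontier_inter (measure_mono_null (frontier_le_subset_eq continuous_const hg)
    (by simpa only [eq_comm] using ht)) hs

lemma measure_frontier_setOf_lt_inter_null (hg : Continuous g) {t : ℝ}
    (ht : ν {v | g v = t} = 0) (hs : ν (frontier s) = 0) :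
    ν (frontier ({v | t < g v} ∩ s)) = 0 :=
  null_frontier_inter (measure_mono_null (frontier_lt_subset_eq continuous_const hg)
    (by simpa only [eq_comm] using ht)) hs

/-- Scaled by `1 / p c`, the law of `(U c, V c)` converges to `volume.restrict (Ioi 0) ⊗ ν`,
tested on the sets `Iic t × B` with `t > 0` and `ν (frontier B) = 0`. -/
def TendstoVolumeProd (P : Measure Ω) (U : ι → Ω → ℝ) (V : ι → Ω → E) (p : ι → ℝ)
    (ν : Measure E) (l : Filter ι) : Prop :=
  ∀ t, 0 < t → ∀ B, MeasurableSet B → ν (frontier B) = 0 →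
    Tendsto (fun c => P.real ({ω | U c ω ≤ t} ∩ V c ⁻¹' B) / p c) l (𝓝 (t * ν.real B))

namespace TendstoVolumeProd

variable [IsFiniteMeasure P] {l : Filter ι} {U : ι → Ω → ℝ} {V : ι → Ω → E} {p : ι → ℝ}

lemma tendsto_Ioc (hlim : TendstoVolumeProd P U V p ν l) (hU : ∀ c, Measurable (U c))
    (hV : ∀ c, Measurable (V c)) (ha : 0 < a) (hab : a ≤ b) {B : Set E} (hB : MeasurableSet B)
    (hBf : ν (frontier B) = 0) :
    Tendsto (fun c => P.real ({ω | U c ω ∈ Ioc a b} ∩ V c ⁻¹' B) / p c) l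
      (𝓝 ((b - a) * ν.real B)) := by
  simp only [measureReal_Ioc_inter_preimage_eq_sub (hU _) (hV _) hab hB, sub_div, sub_mul]
  exact (hlim b (ha.trans_le hab) B hB hBf).sub (hlim a ha B hB hBf)

variable [OpensMeasurableSpace E] [IsFiniteMeasure ν] {C : ℝ}

lemma eventually_div_lt (hlim : TendstoVolumeProd P U V p ν l) (hU : ∀ c, Measurable (U c))
    (hV : ∀ c, Measurable (V c)) (hp : ∀ᶠ c in l, 0 < p c) (hg : Continuous g) (hg0 : ∀ v, 0 ≤ g v)
    (hs : MeasurableSet s) (hsf : ν (frontier s) = 0) (hint : IntegrableOn g s ν)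
    (hVC : ∀ c ω, V c ω ∈ s → g (V c ω) ≤ C) (ha : ∫ v in s, g v ∂ν < a) :
    ∀ᶠ c in l, P.real ({ω | U c ω ≤ g (V c ω)} ∩ V c ⁻¹' s) / p c < a := by
  obtain ⟨δ, hδ, hδa⟩ := exists_pos_mul_lt (sub_pos.2 ha) (ν.real s)
  -- Avoiding the atoms of `g` makes every `{t i ≤ g} ∩ s` a `ν`-continuity set.
  obtain ⟨t, ht, ht0, ht0δ, hgap, htop, hatom⟩ :=
    exists_grid_avoiding (Measure.countable_meas_level_set_pos (μ := ν) hg.measurable) hδ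
  have hnull (i : ℕ) : ν {v | g v = t i} = 0 := nonpos_iff_eq_zero.1 (not_lt.1 (hatom i))
  have htpos (i : ℕ) : 0 < t i := ht0.trans_le (ht (Nat.zero_le i))
  obtain ⟨N, hN⟩ := (htop.eventually_ge_atTop C).exists
  set A : ℕ → Set E := fun i => {v | t i ≤ g v}
  have hA (i : ℕ) : MeasurableSet (A i) := measurableSet_le measurable_const hg.measurable
  have hbound :
      t 0 * ν.real s + ∑ i ∈ Finset.range N, (t (i + 1) - t i) * ν.real (A i ∩ s) < a :=
    (add_sum_mul_measureReal_le_setIntegral_add ht hgap ht0δ hg.measurable hg0 hint N).trans_lt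
      (by linarith)
  have hlimit : Tendsto (fun c => P.real ({ω | U c ω ≤ t 0} ∩ V c ⁻¹' s) / p c +
      ∑ i ∈ Finset.range N, P.real ({ω | U c ω ∈ Ioc (t i) (t (i + 1))} ∩ V c ⁻¹' (A i ∩ s)) / p c)
      l (𝓝 (t 0 * ν.real s + ∑ i ∈ Finset.range N, (t (i + 1) - t i) * ν.real (A i ∩ s))) :=
    (hlim _ ht0 s hs hsf).add <| tendsto_finsetSum _ fun i _ =>
      hlim.tendsto_Ioc hU hV (htpos i) (ht i.le_succ) ((hA i).inter hs)
        (measure_frontier_setOf_le_inter_null hg (hnull i) hsf)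
  have hcover (c : ι) : {ω | U c ω ≤ g (V c ω)} ∩ V c ⁻¹' s ⊆ ({ω | U c ω ≤ t 0} ∩ V c ⁻¹' s) ∪
      ⋃ i ∈ Finset.range N, {ω | U c ω ∈ Ioc (t i) (t (i + 1))} ∩ V c ⁻¹' (A i ∩ s) := by
    rintro ω ⟨hω, hωs⟩
    by_cases h0 : U c ω ≤ t 0
    · exact Or.inl ⟨h0, hωs⟩
    obtain ⟨i, hi, hωi⟩ := mem_iUnion₂.1 (Ioc_subset_biUnion_Ioc N t
      ⟨not_le.1 h0, (hω.trans (hVC c ω hωs)).trans hN⟩)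
    exact Or.inr (mem_biUnion hi ⟨hωi, (hωi.1.trans_le hω).le, hωs⟩)
  filter_upwards [hp, hlimit.eventually_lt_const hbound] with c hpc hc
  refine lt_of_le_of_lt ?_ hc
  rw [← Finset.sum_div, ← add_div]
  refine div_le_div_of_nonneg_right ?_ hpc.le
  exact (measureReal_mono (hcover c)).trans ((measureReal_union_le _ _).trans
    (add_le_add le_rfl (measureReal_biUnion_finset_le _ _)))

lemma eventually_lt_div (hlim : TendstoVolumeProd P U V p ν l) (hU : ∀ c, Measurable (U c))
    (hV : ∀ c, Measurable (V c)) (hp : ∀ᶠ c in l, 0 < p c) (hg : Continuous g)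
    (hs : MeasurableSet s) (hsf : ν (frontier s) = 0) (hint : IntegrableOn g s ν)
    (hνC : ∀ᵐ v ∂ν, v ∈ s → g v ≤ C) (ha : a < ∫ v in s, g v ∂ν) :
    ∀ᶠ c in l, a < P.real ({ω | U c ω ≤ g (V c ω)} ∩ V c ⁻¹' s) / p c := by
  obtain ⟨δ, hδ, hδa⟩ := exists_pos_mul_lt (sub_pos.2 ha) (2 * ν.real s)
  obtain ⟨t, ht, ht0, ht0δ, hgap, htop, hatom⟩ :=
    exists_grid_avoiding (Measure.countable_meas_level_set_pos (μ := ν) hg.measurable) hδ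
  have hnull (i : ℕ) : ν {v | g v = t i} = 0 := nonpos_iff_eq_zero.1 (not_lt.1 (hatom i))
  have htpos (i : ℕ) : 0 < t i := ht0.trans_le (ht (Nat.zero_le i))
  obtain ⟨N, hN⟩ := (htop.eventually_ge_atTop C).exists
  set A : ℕ → Set E := fun i => {v | t (i + 1) < g v}
  have hA (i : ℕ) : MeasurableSet (A i) := measurableSet_lt measurable_const hg.measurable
  have hbound : a < ∑ i ∈ Finset.range N, (t (i + 1) - t i) * ν.real (A i ∩ s) :=
    lt_of_lt_of_le (by linarith) (setIntegral_sub_le_sum_mul_measureReal ht hgap ht0δ hδ.le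
      hg.measurable hs hint (hνC.mono fun v hv hvs => (hv hvs).trans hN))
  set L : ι → ℕ → Set Ω := fun c i => {ω | U c ω ∈ Ioc (t i) (t (i + 1))} ∩ V c ⁻¹' (A i ∩ s)
  have hlimit : Tendsto (fun c => ∑ i ∈ Finset.range N, P.real (L c i) / p c) l
      (𝓝 (∑ i ∈ Finset.range N, (t (i + 1) - t i) * ν.real (A i ∩ s))) :=
    tendsto_finsetSum _ fun i _ =>
      hlim.tendsto_Ioc hU hV (htpos i) (ht i.le_succ) ((hA i).inter hs)
        (measure_frontier_setOf_lt_inter_null hg (hnull (i + 1)) hsf)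
  have hdisj (c : ι) : (Finset.range N : Set ℕ).PairwiseDisjoint (L c) := fun i _ j _ hij =>
    ((ht.pairwise_disjoint_on_Ioc_succ hij).preimage (U c)).mono inter_subset_left
      inter_subset_left
  have hsub (c : ι) : ⋃ i ∈ Finset.range N, L c i ⊆ {ω | U c ω ≤ g (V c ω)} ∩ V c ⁻¹' s := by
    simp only [iUnion_subset_iff]
    rintro i - ω ⟨hωi, hωA, hωs⟩
    exact ⟨hωi.2.trans hωA.le, hωs⟩
  filter_upwards [hp, hlimit.eventually_const_lt hbound] with c hpc hc
  refine hc.trans_le ?_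
  rw [← Finset.sum_div, ← measureReal_biUnion_finset (hdisj c)
    fun i _ => (hU c measurableSet_Ioc).inter (hV c ((hA i).inter hs))]
  exact div_le_div_of_nonneg_right (measureReal_mono (hsub c)) hpc.le

theorem tendsto_measureReal_le_comp (hlim : TendstoVolumeProd P U V p ν l)
    (hU : ∀ c, Measurable (U c)) (hV : ∀ c, Measurable (V c)) (hp : ∀ᶠ c in l, 0 < p c)
    (hg : Continuous g) (hg0 : ∀ v, 0 ≤ g v) (hs : MeasurableSet s) (hsf : ν (frontier s) = 0)
    (hVC : ∀ c ω, V c ω ∈ s → g (V c ω) ≤ C) (hνC : ∀ᵐ v ∂ν, v ∈ s → g v ≤ C) :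
    Tendsto (fun c => P.real ({ω | U c ω ≤ g (V c ω)} ∩ V c ⁻¹' s) / p c) l
      (𝓝 (∫ v in s, g v ∂ν)) := by
  have hint : IntegrableOn g s ν :=
    Measure.integrableOn_of_bounded (measure_ne_top ν s) hg.aestronglyMeasurable (M := C) <| by
      filter_upwards [(ae_restrict_iff' hs).2 hνC] with v hv
      rwa [Real.norm_of_nonneg (hg0 v)]
  exact tendsto_order.2 ⟨fun a ha => hlim.eventually_lt_div hU hV hp hg hs hsf hint hνC ha,
    fun a ha => hlim.eventually_div_lt hU hV hp hg hg0 hs hsf hint hVC ha⟩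

end TendstoVolumeProd

end VolumeProdLimit

section FirstArgmax

variable {n : ℕ}

/-- `(fun j => f k - f j) ∈ firstArgmaxRegion k` iff `k` is the least index where `f` is maximal. -/
def firstArgmaxRegion (k : Fin n) : Set (Fin n → ℝ) :=
  {v | ∀ j, (j < k → 0 < v j) ∧ (k < j → 0 ≤ v j)}

lemma measurableSet_firstArgmaxRegion (k : Fin n) : MeasurableSet (firstArgmaxRegion k) := by
  unfold firstArgmaxRegion
  measurability

lemma measure_frontier_firstArgmaxRegion {k : Fin n} {μ : Measure (Fin n → ℝ)}
    (hμ : ∀ j, k ≠ j → μ {v | v j = 0} = 0) : μ (frontier (firstArgmaxRegion k)) = 0 := by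
  have hopen : IsOpen {v : Fin n → ℝ | ∀ j, j ≠ k → 0 < v j} := by
    simp only [ofPred_forall]
    exact isOpen_iInter_of_finite fun j => isOpen_iInter_of_finite fun _ =>
      isOpen_lt continuous_const (continuous_apply j)
  have hclosed : IsClosed {v : Fin n → ℝ | ∀ j, j ≠ k → 0 ≤ v j} := by
    simp only [ofPred_forall]
    exact isClosed_iInter fun j => isClosed_iInter fun _ =>
      isClosed_le continuous_const (continuous_apply j)
  have hsub_closed : firstArgmaxRegion k ⊆ {v | ∀ j, j ≠ k → 0 ≤ v j} := fun v hv j hj =>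
    hj.lt_or_gt.elim (fun h => ((hv j).1 h).le) (hv j).2
  have hopen_sub : {v | ∀ j, j ≠ k → 0 < v j} ⊆ firstArgmaxRegion k := fun v hv j =>
    ⟨fun h => hv j h.ne, fun h => (hv j h.ne').le⟩
  refine measure_mono_null (fun v ⟨hcl, hint⟩ => ?_)
    (measure_iUnion_null fun j => measure_iUnion_null fun hj => hμ j (Ne.symm hj))
  have hvF := closure_minimal hsub_closed hclosed hcl
  have hvO : v ∉ {v | ∀ j, j ≠ k → 0 < v j} := fun hv => hint (interior_maximal hopen_sub hopen hv)
  simp only [mem_ofPred_eq, not_forall] at hvO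
  obtain ⟨j, hj, hvj⟩ := hvO
  exact mem_iUnion₂.2 ⟨j, hj, le_antisymm (not_lt.1 hvj) (hvF j hj)⟩

lemma nonneg_of_mem_firstArgmaxRegion {k : Fin n} {v : Fin n → ℝ} (hv : v ∈ firstArgmaxRegion k)
    (hk : v k = 0) (j : Fin n) : 0 ≤ v j := by
  rcases lt_trichotomy j k with h | rfl | h
  · exact ((hv j).1 h).le
  · exact hk.ge
  · exact (hv j).2 h

lemma existsUnique_sub_mem_firstArgmaxRegion [Nonempty (Fin n)] (f : Fin n → ℝ) :
    ∃! k, (fun j => f k - f j) ∈ firstArgmaxRegion k := by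
  obtain ⟨m, -, hm⟩ := Finset.exists_max_image Finset.univ f Finset.univ_nonempty
  obtain ⟨k, hk, hmin⟩ := wellFounded_lt.has_min {k | ∀ j, f j ≤ f k}
    ⟨m, fun j => hm j (Finset.mem_univ j)⟩
  have hkR : (fun j => f k - f j) ∈ firstArgmaxRegion k := by
    refine fun j => ⟨fun hjk => ?_, fun _ => sub_nonneg.2 (hk j)⟩
    obtain ⟨i, hi⟩ : ∃ i, f j < f i := by
      by_contra! h
      exact hmin j h hjk
    exact sub_pos.2 (hi.trans_le (hk i))
  refine ⟨k, hkR, fun k' hk' => ?_⟩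
  rcases lt_trichotomy k' k with h | h | h
  · linarith [(hk' k).2 h, (hkR k').1 h]
  · exact h
  · linarith [(hk' k).1 h, (hkR k').2 h]

lemma integrableOn_exp_neg_firstArgmaxRegion {k : Fin n} {μ : Measure (Fin n → ℝ)}
    [IsFiniteMeasure μ] (hk : ∀ᵐ v ∂μ, v k = 0) (j : Fin n) :
    IntegrableOn (fun v => exp (-v j)) (firstArgmaxRegion k) μ :=
  Measure.integrableOn_of_bounded (measure_ne_top _ _)
    (by fun_prop : Continuous fun v : Fin n → ℝ => exp (-v j)).aestronglyMeasurable (M := 1) <| by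
    filter_upwards [ae_restrict_mem (measurableSet_firstArgmaxRegion k), ae_restrict_of_ae hk]
      with v hv hvk
    rw [norm_of_nonneg (exp_pos _).le]
    exact exp_le_one_iff.2 (neg_nonpos.2 (nonneg_of_mem_firstArgmaxRegion hv hvk j))

end FirstArgmax

lemma measureReal_eq_sum_inter_of_existsUnique {Ω ι : Type*} [MeasurableSpace Ω] [Fintype ι]
    {P : Measure Ω} [IsFiniteMeasure P] {A : ι → Set Ω} (hA : ∀ i, MeasurableSet (A i))
    (hpart : ∀ ω, ∃! i, ω ∈ A i) {E : Set Ω} (hE : MeasurableSet E) :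
    P.real E = ∑ i, P.real (E ∩ A i) := by
  have hcover : ⋃ i, E ∩ A i = E := by
    rw [← inter_iUnion, iUnion_eq_univ_iff.2 fun ω => (hpart ω).exists, inter_univ]
  conv_lhs => rw [← hcover]
  exact measureReal_iUnion_fintype (fun i j hij => disjoint_left.2 fun ω hi hj =>
    hij ((hpart ω).unique hi.2 hj.2)) fun i => hE.inter (hA i)

lemma tendsto_measure_of_tendsto_integral {E ι : Type*} [TopologicalSpace E] [MeasurableSpace E]
    [OpensMeasurableSpace E] [HasOuterApproxClosed E] {l : Filter ι} {μs : ι → Measure E}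
    {μ : Measure E} [IsProbabilityMeasure μ] (hμs : ∀ᶠ i in l, IsProbabilityMeasure (μs i))
    (hlim : ∀ f : BoundedContinuousFunction E ℝ,
      Tendsto (fun i => ∫ x, f x ∂μs i) l (𝓝 (∫ x, f x ∂μ)))
    {B : Set E} (hB : μ (frontier B) = 0) : Tendsto (fun i => μs i B) l (𝓝 (μ B)) := by
  classical
  let ps : ι → ProbabilityMeasure E := fun i =>
    if hi : IsProbabilityMeasure (μs i) then ⟨μs i, hi⟩ else ⟨μ, inferInstance⟩
  have hps : ∀ᶠ i in l, (ps i : Measure E) = μs i := hμs.mono fun i hi => by simp [ps, hi]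
  have hweak : Tendsto ps l (𝓝 ⟨μ, inferInstance⟩) :=
    ProbabilityMeasure.tendsto_iff_forall_integral_tendsto.2 fun f =>
      (hlim f).congr' (hps.mono fun i hi => by simp only [hi])
  exact (ProbabilityMeasure.tendsto_measure_of_null_frontier_of_tendsto' hweak hB).congr'
    (hps.mono fun i hi => by rw [hi])

lemma tendstoVolumeProd_of_tendsto_cond {Ω E : Type*} [MeasurableSpace Ω] [TopologicalSpace E]
    [MeasurableSpace E] [OpensMeasurableSpace E] [HasOuterApproxClosed E] {P : Measure Ω}
    [IsProbabilityMeasure P] {X : ℝ → Ω → ℝ} {V : ℝ → Ω → E} {Z : Ω → E} {q : ℝ → ℝ}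
    (hX : ∀ c, Measurable (X c)) (hV : ∀ c, Measurable (V c)) (hZ : Measurable Z)
    (htail : ∀ y, Tendsto (fun c => (P {ω | c + y ≤ X c ω}).toReal / (q c * exp (-c - y)))
      atTop (𝓝 1))
    (hcond : ∀ y (f : BoundedContinuousFunction E ℝ),
      Tendsto (fun c => ∫ v, f v ∂(P[|{ω | c + y ≤ X c ω}].map (V c)))
      atTop (𝓝 (∫ ω, f (Z ω) ∂P))) :
    TendstoVolumeProd P (fun c ω => exp (c - X c ω)) V (fun c => q c * exp (-c)) (P.map Z)
      atTop := by
  intro t ht B hB hBf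
  have hset : ∀ c, {ω | exp (c - X c ω) ≤ t} = {ω | c + -log t ≤ X c ω} := fun c => by
    ext ω
    simp only [mem_ofPred_eq, ← le_log_iff_exp_le ht]
    constructor <;> intro h <;> linarith
  have hE : Tendsto (fun c => P.real {ω | c + -log t ≤ X c ω} / (q c * exp (-c))) atTop (𝓝 t) := by
    convert (htail (-log t)).mul_const t using 1
    · ext c
      rw [sub_neg_eq_add, exp_add, exp_log ht, ← mul_assoc, div_mul_eq_mul_div,
        mul_div_mul_right _ _ ht.ne', measureReal_def]
    · rw [one_mul]
  have : IsProbabilityMeasure (P.map Z) := Measure.isProbabilityMeasure_map hZ.aemeasurable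
  have hprob : ∀ᶠ c in atTop,
      IsProbabilityMeasure (P[|{ω | c + -log t ≤ X c ω}].map (V c)) := by
    filter_upwards [hE.eventually_const_lt ht] with c hc
    have hne : P {ω | c + -log t ≤ X c ω} ≠ 0 := fun h0 => by
      rw [measureReal_def, h0, ENNReal.toReal_zero, zero_div] at hc
      exact lt_irrefl _ hc
    have := cond_isProbabilityMeasure hne
    exact Measure.isProbabilityMeasure_map (hV c).aemeasurable
  have hB' := (ENNReal.tendsto_toReal (measure_ne_top _ B)).comp
    (tendsto_measure_of_tendsto_integral hprob (fun f => by
      simpa only [integral_map hZ.aemeasurable f.continuous.aestronglyMeasurable] using hcond _ f)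
      hBf)
  refine (hE.mul hB').congr fun c => ?_
  simp only [Function.comp_apply, hset, Measure.map_apply (hV c) hB]
  rw [div_mul_eq_mul_div, measureReal_def, ← ENNReal.toReal_mul, mul_comm, cond_mul_eq_inter
    (measurableSet_le measurable_const (hX c)), measureReal_def]

lemma sum_mul_exp_neg_le_sum {ι : Type*} [Fintype ι] {w v : ι → ℝ} (hw : ∀ j, 0 ≤ w j)
    (hv : ∀ j, 0 ≤ v j) : ∑ j, w j * exp (-v j) ≤ ∑ j, w j :=
  Finset.sum_le_sum fun j _ =>
    mul_le_of_le_one_right (hw j) (exp_le_one_iff.2 (neg_nonpos.2 (hv j)))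

lemma exp_sub_le_sum_mul_exp_neg_sub_iff {ι : Type*} [Fintype ι] (c x : ℝ) (w f : ι → ℝ) :
    exp (c - x) ≤ ∑ j, w j * exp (-(x - f j)) ↔ exp c ≤ ∑ j, w j * exp (f j) := by
  have hc : exp (c - x) * exp x = exp c := by rw [← exp_add, sub_add_cancel]
  have hsum : (∑ j, w j * exp (-(x - f j))) * exp x = ∑ j, w j * exp (f j) := by
    rw [Finset.sum_mul]
    refine Finset.sum_congr rfl fun j _ => ?_
    rw [mul_assoc, ← exp_add, neg_sub, sub_add_cancel]
  rw [← mul_le_mul_iff_of_pos_right (exp_pos x), hc, hsum]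

theorem tendsto_measureReal_exp_le_sum_mul_exp {Ω : Type*} [MeasurableSpace Ω] {P : Measure Ω}
    [IsFiniteMeasure P] {n : ℕ} [Nonempty (Fin n)] {S : ℝ → Fin n → Ω → ℝ} {p : ℝ → ℝ}
    {l : Filter ℝ} {ν : Fin n → Measure (Fin n → ℝ)} [∀ k, IsFiniteMeasure (ν k)]
    (hS : ∀ c k, Measurable (S c k)) (hp : ∀ᶠ c in l, 0 < p c)
    (hlim : ∀ k, TendstoVolumeProd P (fun c ω => exp (c - S c k ω))
      (fun c ω j => S c k ω - S c j ω) p (ν k) l)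
    (hνk : ∀ k, ∀ᵐ v ∂ν k, v k = 0) (hν0 : ∀ k j, k ≠ j → ν k {v | v j = 0} = 0)
    {w : Fin n → ℝ} (hw : ∀ j, 0 ≤ w j) :
    Tendsto (fun c => P.real {ω | exp c ≤ ∑ j, w j * exp (S c j ω)} / p c) l
      (𝓝 (∑ j, w j * ∑ k, ∫ v in firstArgmaxRegion k, exp (-v j) ∂ν k)) := by
  have hV (c : ℝ) (k : Fin n) : Measurable fun ω j => S c k ω - S c j ω :=
    measurable_pi_lambda _ fun j => (hS c k).sub (hS c j)
  have hlimit (k : Fin n) : Tendsto (fun c => P.real ({ω | exp (c - S c k ω) ≤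
      ∑ j, w j * exp (-(S c k ω - S c j ω))} ∩
        (fun ω j => S c k ω - S c j ω) ⁻¹' firstArgmaxRegion k) / p c) l
      (𝓝 (∫ v in firstArgmaxRegion k, ∑ j, w j * exp (-v j) ∂ν k)) :=
    (hlim k).tendsto_measureReal_le_comp (g := fun v => ∑ j, w j * exp (-v j))
    (s := firstArgmaxRegion k) (C := ∑ j, w j)
    (fun c => (measurable_const.sub (hS c k)).exp) (fun c => hV c k) hp (by fun_prop)
    (fun v => Finset.sum_nonneg fun j _ => mul_nonneg (hw j) (exp_pos _).le)
    (measurableSet_firstArgmaxRegion k) (measure_frontier_firstArgmaxRegion (hν0 k))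
    (fun c ω hω => sum_mul_exp_neg_le_sum hw (nonneg_of_mem_firstArgmaxRegion hω (sub_self _)))
    ((hνk k).mono fun v hvk hv =>
      sum_mul_exp_neg_le_sum hw (nonneg_of_mem_firstArgmaxRegion hv hvk))
  have hsum := tendsto_finsetSum (Finset.univ : Finset (Fin n)) fun k _ => hlimit k
  convert hsum using 1
  · ext c
    rw [← Finset.sum_div, measureReal_eq_sum_inter_of_existsUnique
      (fun k => hV c k (measurableSet_firstArgmaxRegion k))
      (fun ω => existsUnique_sub_mem_firstArgmaxRegion fun j => S c j ω)
      (measurableSet_le measurable_const (by fun_prop))]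
    simp only [exp_sub_le_sum_mul_exp_neg_sub_iff]
  · congr 1
    simp_rw [Finset.mul_sum]
    rw [Finset.sum_comm]
    refine Finset.sum_congr rfl fun k _ => ?_
    rw [integral_finsetSum _ fun j _ =>
      (integrableOn_exp_neg_firstArgmaxRegion (hνk k) j).const_mul (w j)]
    simp only [integral_const_mul]

theorem sum_setIntegral_exp_neg_eq_one {Ω : Type*} [MeasurableSpace Ω] {P : Measure Ω}
    [IsFiniteMeasure P] {n : ℕ} [Nonempty (Fin n)] {S : ℝ → Fin n → Ω → ℝ} {p : ℝ → ℝ}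
    {l : Filter ℝ} [l.NeBot] {ν : Fin n → Measure (Fin n → ℝ)} [∀ k, IsProbabilityMeasure (ν k)]
    (hS : ∀ c k, Measurable (S c k)) (hp : ∀ᶠ c in l, 0 < p c)
    (hlim : ∀ k, TendstoVolumeProd P (fun c ω => exp (c - S c k ω))
      (fun c ω j => S c k ω - S c j ω) p (ν k) l)
    (hνk : ∀ k, ∀ᵐ v ∂ν k, v k = 0) (hν0 : ∀ k j, k ≠ j → ν k {v | v j = 0} = 0) (j : Fin n) :
    ∑ k, ∫ v in firstArgmaxRegion k, exp (-v j) ∂ν k = 1 := by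
  have hsingle := tendsto_measureReal_exp_le_sum_mul_exp hS hp hlim hνk hν0
    (w := Pi.single j 1) fun i => by by_cases h : i = j <;> simp [h]
  have hone := hlim j 1 one_pos univ MeasurableSet.univ (by simp)
  simp only [Pi.single_apply, ite_mul, one_mul, zero_mul, Finset.sum_ite_eq', Finset.mem_univ,
    if_true, exp_le_exp] at hsingle
  simp only [preimage_univ, inter_univ, exp_le_one_iff, sub_nonpos, one_mul, probReal_univ] at hone
  exact tendsto_nhds_unique hsingle hone

end AverageLikelihoodRatio

open AverageLikelihoodRatio

/-- Conclusion (A.4) of Theorem 3: under the tail condition (A.1) and the conditional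
weak convergence (A.2), `P{n⁻¹ ∑_j e^{S_{jc}} ≥ e^c} ∼ K c^{-1/2} e^{-c}` as `c → ∞`. -/
theorem average_likelihood_ratio_tail
    {Ω : Type*} [MeasurableSpace Ω] (P : Measure Ω) [IsProbabilityMeasure P]
    (n : ℕ) (hn : 1 ≤ n)
    (S : ℝ → Fin n → Ω → ℝ) (hSmeas : ∀ c k, Measurable (S c k))
    (K : ℝ) (hK : 0 < K)
    (Y : Fin n → Fin n → Ω → ℝ) (hYmeas : ∀ k j, Measurable (Y k j))
    (hYkk : ∀ k, ∀ᵐ ω ∂P, Y k k ω = 0)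
    (hYne : ∀ k j, k ≠ j → P {ω | Y k j ω = 0} = 0)
    (hA1 : ∀ (k : Fin n) (y : ℝ),
      Tendsto (fun c : ℝ =>
          (P {ω | c + y ≤ S c k ω}).toReal / (K * c ^ (-(1 : ℝ) / 2) * Real.exp (-c - y)))
        atTop (𝓝 1))
    (hA2 : ∀ (k : Fin n) (y : ℝ) (f : BoundedContinuousFunction (Fin n → ℝ) ℝ),
      Tendsto (fun c : ℝ =>
          ∫ v, f v ∂(Measure.map (fun ω => fun j => S c k ω - S c j ω)
            (ProbabilityTheory.cond P {ω | c + y ≤ S c k ω})))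
        atTop (𝓝 (∫ ω, f (fun j => Y k j ω) ∂P))) :
    Tendsto (fun c : ℝ =>
        (P {ω | Real.exp c ≤ (n : ℝ)⁻¹ * ∑ j : Fin n, Real.exp (S c j ω)}).toReal
          / (K * c ^ (-(1 : ℝ) / 2) * Real.exp (-c)))
      atTop (𝓝 1) := by
  have : Nonempty (Fin n) := ⟨⟨0, hn⟩⟩
  have hp : ∀ᶠ c : ℝ in atTop, 0 < K * c ^ (-(1 : ℝ) / 2) * exp (-c) :=
    (eventually_gt_atTop 0).mono fun c hc => by positivity
  have hY (k : Fin n) : Measurable fun ω j => Y k j ω := measurable_pi_lambda _ (hYmeas k)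
  have hlim (k : Fin n) := tendstoVolumeProd_of_tendsto_cond (hSmeas · k)
    (fun c => measurable_pi_lambda _ fun j => (hSmeas c k).sub (hSmeas c j)) (hY k) (hA1 k) (hA2 k)
  have hνk (k : Fin n) : ∀ᵐ v ∂P.map (fun ω j => Y k j ω), v k = 0 :=
    (ae_map_iff (hY k).aemeasurable (measurableSet_eq_fun (measurable_pi_apply k)
      measurable_const)).2 (hYkk k)
  have hν0 (k j : Fin n) (hkj : k ≠ j) : P.map (fun ω j => Y k j ω) {v | v j = 0} = 0 := by
    rw [Measure.map_apply (hY k) (measurableSet_eq_fun (measurable_pi_apply j) measurable_const)]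
    exact hYne k j hkj
  have : ∀ k, IsProbabilityMeasure (P.map fun ω j => Y k j ω) := fun k =>
    Measure.isProbabilityMeasure_map (hY k).aemeasurable
  have huniform := tendsto_measureReal_exp_le_sum_mul_exp hSmeas hp hlim hνk hν0
    (w := fun _ => (n : ℝ)⁻¹) fun _ => by positivity
  simp only [← Finset.mul_sum, sum_setIntegral_exp_neg_eq_one hSmeas hp hlim hνk hν0,
    Finset.sum_const, Finset.card_univ, Fintype.card_fin, nsmul_eq_mul, mul_one,
    mul_inv_cancel₀ (Nat.cast_pos.2 hn : (0 : ℝ) < n).ne'] at huniform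
  exact huniform
end

section
/- Fix integers 0 < n_B < J, 0 ≤ m_B ≤ n_B, 0 ≤ I − m_B ≤ J − n_B, set p̂_0 = I/J with 0 < p̂_0 < 1, and let c > 0. Suppose (p_B, p̃_B) ∈ (0,1)² with p_B > p̂_0 solves n_B p_B + (J−n_B) p̃_B = I and n_B φ(p_B) + (J−n_B) φ(p̃_B) = c/2. Then S^(1)(B) ≥ ℓ(B), where ℓ(B) = c/2 + θ(p_B)(m_B − n_B p_B) + θ(p̃_B)((I − m_B) − (J − n_B) p̃_B). -/
/-! `phi q` is convex with derivative `theta q`, and the gap in its tangent inequality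
`phi q p + theta q p * (x - p) ≤ phi q x` is the binary Kullback–Leibler divergence `phi p x ≥ 0`.
Summing the tangent inequalities at `p_B` and `p̃_B` with weights `n_B` and `J − n_B` gives
`S⁽¹⁾(B) ≥ ℓ(B)` when `m_B/n_B > p̂₀`. Otherwise `S⁽¹⁾(B) = 0`, and comparing with the tangent
inequalities at `x = p̂₀`, where `phi` vanishes, shows `ℓ(B) ≤ 0`: the two empirical proportions
average to `p̂₀`, and `theta` is monotone with `p̃_B < p̂₀ < p_B`. -/

open Real

/-- `φ(p) = p log(p/p̂₀) + (1−p) log((1−p)/(1−p̂₀))`. -/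
noncomputable def phi (q p : ℝ) : ℝ :=
  p * Real.log (p / q) + (1 - p) * Real.log ((1 - p) / (1 - q))

/-- `θ(p) = log(p/p̂₀) − log((1−p)/(1−p̂₀))`. -/
noncomputable def theta (q p : ℝ) : ℝ :=
  Real.log (p / q) - Real.log ((1 - p) / (1 - q))

open Set InformationTheory

lemma mul_log_div_eq (x : ℝ) {q : ℝ} (hq : q ≠ 0) : x * log (x / q) = x * (log x - log q) := by
  rcases eq_or_ne x 0 with rfl | hx
  · simp
  · rw [log_div hx hq]

@[simp]
lemma phi_self (q : ℝ) : phi q q = 0 := by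
  rcases eq_or_ne q 0 with rfl | hq
  · simp [phi]
  rcases eq_or_ne (1 - q) 0 with hq1 | hq1
  · simp [phi, hq1]
  · simp [phi, div_self hq, div_self hq1]

lemma phi_eq_phi_add_theta_mul_add_phi {q p : ℝ} (x : ℝ) (hq : q ≠ 0) (hq1 : 1 - q ≠ 0)
    (hp : p ≠ 0) (hp1 : 1 - p ≠ 0) :
    phi q x = phi q p + theta q p * (x - p) + phi p x := by
  simp only [phi, theta, mul_log_div_eq _ hq, mul_log_div_eq _ hq1, mul_log_div_eq _ hp,
    mul_log_div_eq _ hp1, log_div hp hq, log_div hp1 hq1]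
  ring

lemma phi_eq_klFun {p : ℝ} (x : ℝ) (hp : p ∈ Ioo 0 1) :
    phi p x = p * klFun (x / p) + (1 - p) * klFun ((1 - x) / (1 - p)) := by
  have hp0 : p ≠ 0 := hp.1.ne'
  have hp1 : 1 - p ≠ 0 := (sub_pos.2 hp.2).ne'
  simp only [phi, klFun_apply]
  field_simp
  ring

lemma phi_nonneg {p x : ℝ} (hp : p ∈ Ioo 0 1) (hx : x ∈ Icc 0 1) : 0 ≤ phi p x := by
  rw [phi_eq_klFun x hp]
  have hp1 : 0 < 1 - p := sub_pos.2 hp.2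
  exact add_nonneg (mul_nonneg hp.1.le (klFun_nonneg (div_nonneg hx.1 hp.1.le)))
    (mul_nonneg hp1.le (klFun_nonneg (div_nonneg (sub_nonneg.2 hx.2) hp1.le)))

lemma phi_add_theta_mul_le {q p x : ℝ} (hq : q ∈ Ioo 0 1) (hp : p ∈ Ioo 0 1) (hx : x ∈ Icc 0 1) :
    phi q p + theta q p * (x - p) ≤ phi q x := by
  rw [phi_eq_phi_add_theta_mul_add_phi x hq.1.ne' (sub_pos.2 hq.2).ne' hp.1.ne'
    (sub_pos.2 hp.2).ne']
  linarith [phi_nonneg hp hx]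

lemma theta_le_theta {q p p' : ℝ} (hq : q ∈ Ioo 0 1) (hp : 0 < p) (hpp' : p ≤ p') (hp' : p' < 1) :
    theta q p ≤ theta q p' := by
  have hq1 : 0 < 1 - q := sub_pos.2 hq.2
  have hlog : log (p / q) ≤ log (p' / q) :=
    log_le_log (div_pos hp hq.1) (div_le_div_of_nonneg_right hpp' hq.1.le)
  have hlog1 : log ((1 - p') / (1 - q)) ≤ log ((1 - p) / (1 - q)) :=
    log_le_log (div_pos (sub_pos.2 hp') hq1) (div_le_div_of_nonneg_right (by linarith) hq1.le)
  unfold theta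
  linarith

section WeightedTangent

variable {a b q p p' x y : ℝ}

lemma weighted_tangent_le_weighted_phi (ha : 0 ≤ a) (hb : 0 ≤ b) (hq : q ∈ Ioo 0 1)
    (hp : p ∈ Ioo 0 1) (hp' : p' ∈ Ioo 0 1) (hx : x ∈ Icc 0 1) (hy : y ∈ Icc 0 1) :
    a * phi q p + b * phi q p' + theta q p * (a * x - a * p) + theta q p' * (b * y - b * p')
      ≤ a * phi q x + b * phi q y := by
  have hpx := mul_le_mul_of_nonneg_left (phi_add_theta_mul_le hq hp hx) ha
  have hp'y := mul_le_mul_of_nonneg_left (phi_add_theta_mul_le hq hp' hy) hb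
  linarith

lemma weighted_tangent_nonpos (ha : 0 ≤ a) (hb : 0 ≤ b) (hq : q ∈ Ioo 0 1)
    (hp : p ∈ Ioo 0 1) (hp' : p' ∈ Ioo 0 1) (hp'p : p' ≤ p) (hxq : x ≤ q)
    (hxy : a * x + b * y = (a + b) * q) :
    a * phi q p + b * phi q p' + theta q p * (a * x - a * p) + theta q p' * (b * y - b * p')
      ≤ 0 := by
  have hqq : q ∈ Icc 0 1 := Ioo_subset_Icc_self hq
  have htangent := weighted_tangent_le_weighted_phi ha hb hq hp hp' hqq hqq
  have htheta := theta_le_theta hq hp'.1 hp'p hp.2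
  have hshift : 0 ≤ a * (q - x) * (theta q p - theta q p') :=
    mul_nonneg (mul_nonneg ha (sub_nonneg.2 hxq)) (sub_nonneg.2 htheta)
  have hbalance : b * y - b * q = a * q - a * x := by linarith
  simp only [phi_self, mul_zero, add_zero] at htangent
  linear_combination htangent + hshift + theta q p' * hbalance

end WeightedTangent

theorem glr_ge_loglikelihood_ratio_general
    (J nB mB I : ℕ) (hnBpos : 0 < nB) (hnBJ : nB < J)
    (hmBnB : mB ≤ nB) (hmBI : mB ≤ I)
    (hrest : (I : ℝ) - (mB : ℝ) ≤ (J : ℝ) - (nB : ℝ))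
    (p0 : ℝ) (hp0 : p0 = (I : ℝ) / (J : ℝ)) (hp0pos : 0 < p0) (hp0lt : p0 < 1)
    (c : ℝ)
    (pB ptB : ℝ) (hpB : pB ∈ Set.Ioo (0 : ℝ) 1) (hptB : ptB ∈ Set.Ioo (0 : ℝ) 1)
    (hpBgt : p0 < pB)
    (heq1 : (nB : ℝ) * pB + ((J : ℝ) - (nB : ℝ)) * ptB = (I : ℝ))
    (heq2 : (nB : ℝ) * phi p0 pB + ((J : ℝ) - (nB : ℝ)) * phi p0 ptB = c / 2) :
    (if p0 < (mB : ℝ) / (nB : ℝ) then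
        (nB : ℝ) * phi p0 ((mB : ℝ) / (nB : ℝ))
          + ((J : ℝ) - (nB : ℝ)) * phi p0 (((I : ℝ) - (mB : ℝ)) / ((J : ℝ) - (nB : ℝ)))
      else 0)
      ≥ c / 2 + theta p0 pB * ((mB : ℝ) - (nB : ℝ) * pB)
          + theta p0 ptB * (((I : ℝ) - (mB : ℝ)) - ((J : ℝ) - (nB : ℝ)) * ptB) := by
  have ha : (0 : ℝ) < nB := Nat.cast_pos.2 hnBpos
  have hb : (0 : ℝ) < (J : ℝ) - nB := sub_pos.2 (Nat.cast_lt.2 hnBJ)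
  set a : ℝ := (nB : ℝ)
  set b : ℝ := (J : ℝ) - a with hbdef
  set x : ℝ := (mB : ℝ) / a
  set y : ℝ := ((I : ℝ) - mB) / b
  have hq : p0 ∈ Ioo 0 1 := ⟨hp0pos, hp0lt⟩
  have hx : x ∈ Icc 0 1 := ⟨by positivity, (div_le_one ha).2 (Nat.cast_le.2 hmBnB)⟩
  have hy : y ∈ Icc 0 1 :=
    ⟨div_nonneg (sub_nonneg.2 (Nat.cast_le.2 hmBI)) hb.le, (div_le_one hb).2 hrest⟩
  have hmB : (mB : ℝ) = a * x := (mul_div_cancel₀ _ ha.ne').symm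
  have hImB : (I : ℝ) - mB = b * y := (mul_div_cancel₀ _ hb.ne').symm
  have hI : (I : ℝ) = (a + b) * p0 := by
    rw [hp0, hbdef, add_sub_cancel, mul_div_cancel₀ _ (by linarith)]
  have hptB_lt : ptB < p0 := by
    by_contra! h
    nlinarith [mul_nonneg hb.le (sub_nonneg.2 h), mul_lt_mul_of_pos_left hpBgt ha]
  rw [ge_iff_le, ← heq2, hImB, hmB]
  split_ifs with hxq
  · exact weighted_tangent_le_weighted_phi ha.le hb.le hq hpB hptB hx hy
  · exact weighted_tangent_nonpos ha.le hb.le hq hpB hptB (by linarith) (not_lt.1 hxq)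
      (by linarith)

/-- Lemma 1(a): with `(p_B, p̃_B)` the change-of-measure parameters of (6.3),
the one-sided GLR score satisfies `S⁽¹⁾(B) ≥ ℓ(B)`, where
`ℓ(B) = c/2 + θ(p_B)(m_B − n_B p_B) + θ(p̃_B)((I−m_B) − (J−n_B) p̃_B)`. -/
theorem glr_ge_loglikelihood_ratio
    (J nB mB I : ℕ) (hnBpos : 0 < nB) (hnBJ : nB < J)
    (hmBnB : mB ≤ nB) (hmBI : mB ≤ I) (hIJ : I ≤ J)
    (hrest : (I : ℝ) - (mB : ℝ) ≤ (J : ℝ) - (nB : ℝ))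
    (p0 : ℝ) (hp0 : p0 = (I : ℝ) / (J : ℝ)) (hp0pos : 0 < p0) (hp0lt : p0 < 1)
    (c : ℝ) (hc : 0 < c)
    (pB ptB : ℝ) (hpB : pB ∈ Set.Ioo (0 : ℝ) 1) (hptB : ptB ∈ Set.Ioo (0 : ℝ) 1)
    (hpBgt : p0 < pB)
    (heq1 : (nB : ℝ) * pB + ((J : ℝ) - (nB : ℝ)) * ptB = (I : ℝ))
    (heq2 : (nB : ℝ) * phi p0 pB + ((J : ℝ) - (nB : ℝ)) * phi p0 ptB = c / 2) :
    (if p0 < (mB : ℝ) / (nB : ℝ) then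
        (nB : ℝ) * phi p0 ((mB : ℝ) / (nB : ℝ))
          + ((J : ℝ) - (nB : ℝ)) * phi p0 (((I : ℝ) - (mB : ℝ)) / ((J : ℝ) - (nB : ℝ)))
      else 0)
      ≥ c / 2 + theta p0 pB * ((mB : ℝ) - (nB : ℝ) * pB)
          + theta p0 ptB * (((I : ℝ) - (mB : ℝ)) - ((J : ℝ) - (nB : ℝ)) * ptB) :=
  glr_ge_loglikelihood_ratio_general J nB mB I hnBpos hnBJ hmBnB hmBI hrest p0 hp0 hp0pos hp0lt c pB
    ptB hpB hptB hpBgt heq1 heq2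
end

section
/- There exist constants c_0 > 0 and K > 0 such that the following holds. Let c ≥ c_0, let 𝓑 be a finite nonempty index set with log(#𝓑) ≤ c^{1/3}/2, let (z_B)_{B∈𝓑} be real numbers, and define ℓ(B) = c^{1/2} z_B − c/2 and U = 2 log((#𝓑)^{-1} Σ_{B∈𝓑} e^{max(z_B,0)²/2}). If c ≤ U ≤ c + c^{1/3}, then U/2 − K c^{-1/3} ≤ log((#𝓑)^{-1} Σ_{B∈𝓑} e^{ℓ(B)}) ≤ U/2. -/
open Filter Real

/-!
Pointwise `√c z - c/2 ≤ max(z,0)²/2`, which is the upper bound. For the lower bound write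
`t = c^{1/3}`. Since a single term of `∑ e^{max(z_B,0)²/2}` is at most the whole sum, the
hypotheses on `U` and `#𝓑` give `max(z_B,0)² ≤ c + 2t` for every `B`. The indices with
`max(z_B,0)² < c - 2t` carry at most the fraction `e^{-t}` of that sum, and on the others
`(z_B - √c)² ≤ (z_B² - c)² / c ≤ 4/t`, so the two exponents differ by at most `2/t`.
-/

noncomputable def logMeanExp {ι : Type*} (s : Finset ι) (f : ι → ℝ) : ℝ :=
  Real.log ((s.card : ℝ)⁻¹ * ∑ i ∈ s, Real.exp (f i))

lemma neg_inv_le_log_one_sub_exp_neg {t : ℝ} (ht : 0 < t) : -t⁻¹ ≤ log (1 - exp (-t)) := by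
  have hexp : 1 < exp t := one_lt_exp_iff.2 ht
  have hpos : 0 < 1 - exp (-t) := by rw [sub_pos, exp_lt_one_iff]; linarith
  have key : -t⁻¹ ≤ 1 - (1 - exp (-t))⁻¹ := by
    have h : 1 - (1 - exp (-t))⁻¹ = -(exp t - 1)⁻¹ := by
      have : exp t - 1 ≠ 0 := by linarith
      rw [exp_neg]; field_simp; ring
    rw [h, neg_le_neg_iff]
    exact inv_anti₀ ht (by linarith [add_one_le_exp t])
  exact key.trans (one_sub_inv_le_log_of_pos hpos)

lemma sq_sub_mul_sq_le {x y : ℝ} (hx : 0 ≤ x) (hy : 0 ≤ y) :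
    (x - y) ^ 2 * y ^ 2 ≤ (x ^ 2 - y ^ 2) ^ 2 :=
  calc (x - y) ^ 2 * y ^ 2 ≤ (x - y) ^ 2 * (x + y) ^ 2 := by gcongr; linarith
    _ = (x ^ 2 - y ^ 2) ^ 2 := by ring

lemma mul_sub_half_sq_le_half_max_sq {s : ℝ} (hs : 0 ≤ s) (z : ℝ) :
    s * z - s ^ 2 / 2 ≤ max z 0 ^ 2 / 2 := by
  rcases le_total z 0 with hz | hz
  · rw [max_eq_right hz]; nlinarith [mul_nonpos_of_nonneg_of_nonpos hs hz]
  · rw [max_eq_left hz]; nlinarith [sq_nonneg (z - s)]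

lemma half_max_sq_sub_le_mul_sub_half_sq {s z δ : ℝ} (hs : 0 < s) (hδ : δ < s ^ 2)
    (hlo : s ^ 2 - δ ≤ max z 0 ^ 2) (hhi : max z 0 ^ 2 ≤ s ^ 2 + δ) :
    max z 0 ^ 2 / 2 - δ ^ 2 / (2 * s ^ 2) ≤ s * z - s ^ 2 / 2 := by
  have hz : 0 < z := by
    by_contra! hz
    rw [max_eq_right hz] at hlo
    linarith
  rw [max_eq_left hz.le] at hlo hhi ⊢
  have hsq : (z - s) ^ 2 ≤ δ ^ 2 / s ^ 2 := by
    rw [le_div_iff₀ (by positivity)]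
    exact (sq_sub_mul_sq_le hz.le hs.le).trans (sq_le_sq' (by linarith) (by linarith))
  have : δ ^ 2 / (2 * s ^ 2) = δ ^ 2 / s ^ 2 / 2 := by ring
  rw [this]
  linarith [show (z - s) ^ 2 = z ^ 2 - 2 * (s * z) + s ^ 2 by ring]

section LogMeanExp

open Finset

variable {ι : Type*} {s : Finset ι} {f g : ι → ℝ}

lemma sum_exp_pos (hs : s.Nonempty) : 0 < ∑ i ∈ s, exp (f i) :=
  sum_pos (fun i _ => exp_pos (f i)) hs

lemma logMeanExp_eq (hs : s.Nonempty) :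
    logMeanExp s f = log (∑ i ∈ s, exp (f i)) - log #s := by
  rw [logMeanExp, log_mul (by simpa using hs.ne_empty) (sum_exp_pos hs).ne', log_inv]
  ring

lemma logMeanExp_mono (hs : s.Nonempty) (h : ∀ i ∈ s, f i ≤ g i) :
    logMeanExp s f ≤ logMeanExp s g := by
  rw [logMeanExp_eq hs, logMeanExp_eq hs]
  gcongr with i hi
  exact h i hi

lemma le_logMeanExp_add_log_card {i : ι} (hi : i ∈ s) : f i ≤ logMeanExp s f + log #s := by
  rw [logMeanExp_eq ⟨i, hi⟩, sub_add_cancel, ← exp_le_exp, exp_log (sum_exp_pos ⟨i, hi⟩)]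
  exact single_le_sum (fun j _ => (exp_pos (f j)).le) hi

lemma exp_neg_mul_sub_le_sum_exp {a ε : ℝ} (h : ∀ i ∈ s, a ≤ f i → f i - ε ≤ g i) :
    exp (-ε) * (∑ i ∈ s, exp (f i) - #s * exp a) ≤ ∑ i ∈ s, exp (g i) := by
  rw [← sum_filter_add_sum_filter_not s (fun i => a ≤ f i)]
  have hlow : ∑ i ∈ s with ¬a ≤ f i, exp (f i) ≤ #s * exp a :=
    calc ∑ i ∈ s with ¬a ≤ f i, exp (f i)
        ≤ #{i ∈ s | ¬a ≤ f i} * exp a := by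
          rw [← nsmul_eq_mul]
          exact sum_le_card_nsmul _ _ _ fun i hi =>
            exp_le_exp.2 (not_le.1 (mem_filter.1 hi).2).le
      _ ≤ #s * exp a := by gcongr; exact filter_subset _ _
  have hhigh : exp (-ε) * ∑ i ∈ s with a ≤ f i, exp (f i) ≤ ∑ i ∈ s, exp (g i) :=
    calc exp (-ε) * ∑ i ∈ s with a ≤ f i, exp (f i)
        = ∑ i ∈ s with a ≤ f i, exp (f i - ε) := by
          rw [mul_sum]; simp only [sub_eq_add_neg, exp_add, mul_comm]
      _ ≤ ∑ i ∈ s with a ≤ f i, exp (g i) := by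
          gcongr with i hi
          exact h i (mem_filter.1 hi).1 (mem_filter.1 hi).2
      _ ≤ ∑ i ∈ s, exp (g i) :=
          sum_le_sum_of_subset_of_nonneg (filter_subset _ _) fun i _ _ => (exp_pos _).le
  nlinarith [exp_pos (-ε)]

lemma logMeanExp_sub_le {a ε t : ℝ} (hs : s.Nonempty) (ht : 0 < t)
    (ha : a ≤ logMeanExp s f - t) (h : ∀ i ∈ s, a ≤ f i → f i - ε ≤ g i) :
    logMeanExp s f - ε - t⁻¹ ≤ logMeanExp s g := by
  set F := ∑ i ∈ s, exp (f i)
  have hF : 0 < F := sum_exp_pos hs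
  have hN : (0 : ℝ) < #s := by exact_mod_cast hs.card_pos
  have hcut : #s * exp a ≤ F * exp (-t) := by
    have := exp_le_exp.2 ha
    rw [logMeanExp_eq hs, sub_sub, exp_sub, exp_add, exp_log hF, exp_log hN] at this
    calc #s * exp a ≤ #s * (F / (#s * exp t)) := by gcongr
      _ = F * exp (-t) := by rw [exp_neg]; field_simp
  have hmass : exp (-ε) * (F * (1 - exp (-t))) ≤ ∑ i ∈ s, exp (g i) :=
    calc exp (-ε) * (F * (1 - exp (-t))) ≤ exp (-ε) * (F - #s * exp a) := by
          gcongr; linarith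
      _ ≤ _ := exp_neg_mul_sub_le_sum_exp h
  have hpos : 0 < 1 - exp (-t) := by rw [sub_pos, exp_lt_one_iff]; linarith
  have hlog := log_le_log (by positivity) hmass
  rw [log_mul (exp_pos _).ne' (by positivity), log_mul hF.ne' hpos.ne', log_exp] at hlog
  rw [logMeanExp_eq hs, logMeanExp_eq hs]
  linarith [neg_inv_le_log_one_sub_exp_neg ht]

end LogMeanExp

lemma rpow_one_third_pow_three {c : ℝ} (hc : 0 ≤ c) : (c ^ ((1 : ℝ) / 3)) ^ 3 = c := by
  simpa using rpow_inv_natCast_pow (n := 3) hc (by norm_num)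

theorem logMeanExp_sandwich {ι : Type*} {s : Finset ι} (hs : s.Nonempty) {c t : ℝ}
    (ht : 2 ≤ t) (hc : t ^ 3 = c) (hcard : log s.card ≤ t / 2) (z : ι → ℝ)
    (hU₁ : c / 2 ≤ logMeanExp s (fun i => max (z i) 0 ^ 2 / 2))
    (hU₂ : logMeanExp s (fun i => max (z i) 0 ^ 2 / 2) ≤ (c + t) / 2) :
    logMeanExp s (fun i => max (z i) 0 ^ 2 / 2) - 3 / t
        ≤ logMeanExp s (fun i => √c * z i - c / 2) ∧
      logMeanExp s (fun i => √c * z i - c / 2)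
        ≤ logMeanExp s (fun i => max (z i) 0 ^ 2 / 2) := by
  have hc0 : 0 < c := by rw [← hc]; positivity
  refine ⟨?_, logMeanExp_mono hs fun i _ => ?_⟩
  · have hclose : ∀ i ∈ s, c / 2 - t ≤ max (z i) 0 ^ 2 / 2 →
        max (z i) 0 ^ 2 / 2 - 2 / t ≤ √c * z i - c / 2 := by
      intro i hi hlo
      have hhi := le_logMeanExp_add_log_card (f := fun i => max (z i) 0 ^ 2 / 2) hi
      have hδ : 2 * t < c := by rw [← hc]; nlinarith [mul_le_mul ht ht zero_le_two (by linarith)]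
      have h := half_max_sq_sub_le_mul_sub_half_sq (z := z i) (δ := 2 * t) (sqrt_pos.2 hc0)
        (by rwa [sq_sqrt hc0.le]) (by rw [sq_sqrt hc0.le]; linarith)
        (by rw [sq_sqrt hc0.le]; linarith)
      rwa [sq_sqrt hc0.le, show (2 * t) ^ 2 / (2 * c) = 2 / t by
        rw [← hc]; field_simp] at h
    have := logMeanExp_sub_le hs (by positivity) (by linarith) hclose
    linarith [show 2 / t + t⁻¹ = 3 / t by ring]
  · simpa [sq_sqrt hc0.le] using mul_sub_half_sq_le_half_max_sq (sqrt_nonneg c) (z i)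

/-- The deterministic sandwich (6.11) used in the proof of Theorem 2: there are
constants `c₀, K > 0` such that for `c ≥ c₀`, any finite nonempty index set `𝓑` with
`log(#𝓑) ≤ c^{1/3}/2` and any reals `(z_B)`, setting `ℓ(B) = √c z_B − c/2` and
`U = 2 log((#𝓑)⁻¹ ∑ e^{max(z_B,0)²/2})`, if `c ≤ U ≤ c + c^{1/3}` then
`U/2 − K c^{−1/3} ≤ log((#𝓑)⁻¹ ∑ e^{ℓ(B)}) ≤ U/2`. -/
theorem average_likelihood_sandwich :
    ∃ c₀ K : ℝ, 0 < c₀ ∧ 0 < K ∧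
      ∀ c : ℝ, c₀ ≤ c →
        ∀ (ι : Type) (𝓑 : Finset ι), 𝓑.Nonempty →
          Real.log (𝓑.card : ℝ) ≤ c ^ ((1 : ℝ) / 3) / 2 →
          ∀ z : ι → ℝ,
            c ≤ 2 * Real.log ((𝓑.card : ℝ)⁻¹ * ∑ B ∈ 𝓑, Real.exp (max (z B) 0 ^ 2 / 2)) →
            2 * Real.log ((𝓑.card : ℝ)⁻¹ * ∑ B ∈ 𝓑, Real.exp (max (z B) 0 ^ 2 / 2))
              ≤ c + c ^ ((1 : ℝ) / 3) →
            (2 * Real.log ((𝓑.card : ℝ)⁻¹ * ∑ B ∈ 𝓑, Real.exp (max (z B) 0 ^ 2 / 2))) / 2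
                - K * c ^ (-(1 : ℝ) / 3)
              ≤ Real.log ((𝓑.card : ℝ)⁻¹ * ∑ B ∈ 𝓑, Real.exp (Real.sqrt c * z B - c / 2)) ∧
            Real.log ((𝓑.card : ℝ)⁻¹ * ∑ B ∈ 𝓑, Real.exp (Real.sqrt c * z B - c / 2))
              ≤ (2 * Real.log ((𝓑.card : ℝ)⁻¹ * ∑ B ∈ 𝓑, Real.exp (max (z B) 0 ^ 2 / 2))) / 2 := by
  refine ⟨8, 3, by norm_num, by norm_num, fun c hc ι 𝓑 h𝓑 hcard z hU₁ hU₂ => ?_⟩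
  have hc0 : 0 ≤ c := by linarith
  have ht3 := rpow_one_third_pow_three hc0
  have ht2 : 2 ≤ c ^ ((1 : ℝ) / 3) :=
    le_of_pow_le_pow_left₀ three_ne_zero (by positivity) (by rw [ht3]; linarith)
  obtain ⟨hlo, hhi⟩ := logMeanExp_sandwich h𝓑 ht2 ht3 hcard z
    (by unfold logMeanExp; linarith) (by unfold logMeanExp; linarith)
  simp only [logMeanExp] at hlo hhi
  rw [neg_div, rpow_neg hc0, ← div_eq_mul_inv]
  constructor <;> linarith
end
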